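/- arXiv:2403.07674 — 4 statements merged into one kernel-verified Lean document; each statement's English description precedes it below -/
import Mathlib

section
/- Let Φ: ℕ → (0,∞). If the series ∑_{n=1}^∞ 1/Φ(n) diverges, then the set E(Φ) = {x ∈ [0,1) : a_n(x) ≥ Φ(n) for infinitely many n} has Lebesgue measure 1. -/
/-- The Gauss map. -/
noncomputable def gaussMap (x : ℝ) : ℝ := Int.fract x⁻¹

/-- The `n`-th partial quotient (for `n ≥ 1`) of the continued fraction
expansion of `x ∈ (0,1)`:  `a₁ = ⌊1/x⌋`, `aₙ = a₁(Gⁿ⁻¹ x)`. -/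
noncomputable def cfA (x : ℝ) (n : ℕ) : ℕ := ⌊(gaussMap^[n - 1] x)⁻¹⌋₊

/-- The denominators of the continued fraction convergents of `x`:
`q₀ = 1`, `q₁ = a₁`, `qₙ = aₙ qₙ₋₁ + qₙ₋₂`. -/
noncomputable def cfQ (x : ℝ) : ℕ → ℕ
  | 0 => 1
  | 1 => cfA x 1
  | (n + 2) => cfA x (n + 2) * cfQ x (n + 1) + cfQ x n

open Filter MeasureTheory Set Topology

noncomputable def mob : List ℕ → ℝ → ℝ
  | [], t => t
  | a :: w, t => ((a : ℝ) + mob w t)⁻¹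

noncomputable def mco : List ℕ → ℝ × ℝ × ℝ × ℝ
  | [] => (1, 0, 0, 1)
  | a :: w =>
    let c := mco w
    (c.2.2.1, c.2.2.2, c.1 + a * c.2.2.1, c.2.1 + a * c.2.2.2)

noncomputable def cfWord (x : ℝ) : ℕ → List ℕ
  | 0 => []
  | n + 1 => cfA x 1 :: cfWord (gaussMap x) n

def cyl (w : List ℕ) : Set ℝ :=
  {x | x ∈ Ioo (0:ℝ) 1 ∧ Irrational x ∧ cfWord x w.length = w}

def Words (Φ : ℕ → ℝ) (N m : ℕ) : Set (List ℕ) :=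
  {w | w.length = m ∧ (∀ a ∈ w, 1 ≤ a) ∧
    ∀ i < m, N ≤ i + 1 → ((w.getD i 0 : ℝ)) < Φ (i + 1)}

def Bad (Φ : ℕ → ℝ) (N m : ℕ) : Set ℝ :=
  {x | x ∈ Ioo (0:ℝ) 1 ∧ Irrational x ∧ ∀ n, N ≤ n → n ≤ m → ((cfA x n : ℝ)) < Φ n}


lemma mco_nonneg {w : List ℕ} (hw : ∀ a ∈ w, 1 ≤ a) :
    0 ≤ (mco w).1 ∧ 0 ≤ (mco w).2.1 ∧ 0 ≤ (mco w).2.2.1 ∧ 1 ≤ (mco w).2.2.2 := by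
  induction w with
  | nil => norm_num [mco]
  | cons a w ih =>
    obtain ⟨h1, h2, h3, h4⟩ := ih (fun b hb => hw b (List.mem_cons_of_mem a hb))
    have ha : (1 : ℝ) ≤ a := by exact_mod_cast hw a (List.mem_cons_self)
    refine ⟨?_, ?_, ?_, ?_⟩ <;> simp only [mco] <;> nlinarith

lemma mco_det (w : List ℕ) :
    (mco w).1 * (mco w).2.2.2 - (mco w).2.1 * (mco w).2.2.1 = (-1) ^ w.length := by
  induction w with
  | nil => simp [mco]
  | cons a w ih => simp only [mco, List.length_cons, pow_succ]; ring_nf; ring_nf at ih; linarith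

lemma mob_eq {w : List ℕ} (hw : ∀ a ∈ w, 1 ≤ a) {t : ℝ} (ht : 0 ≤ t) :
    mob w t = ((mco w).1 * t + (mco w).2.1) / ((mco w).2.2.1 * t + (mco w).2.2.2) := by
  induction w with
  | nil => simp [mob, mco]
  | cons a w ih =>
    obtain ⟨h1, h2, h3, h4⟩ := mco_nonneg (fun b hb => hw b (List.mem_cons_of_mem a hb))
    have hd : 0 < (mco w).2.2.1 * t + (mco w).2.2.2 := by positivity
    simp only [mob, mco, ih (fun b hb => hw b (List.mem_cons_of_mem a hb))]
    rw [add_div' _ _ _ hd.ne', inv_div]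
    have : (a:ℝ) * ((mco w).2.2.1 * t + (mco w).2.2.2) + ((mco w).1 * t + (mco w).2.1)
        = ((mco w).1 + ↑a * (mco w).2.2.1) * t + ((mco w).2.1 + ↑a * (mco w).2.2.2) := by ring
    rw [this]

lemma mob_sub {w : List ℕ} (hw : ∀ a ∈ w, 1 ≤ a) {s t : ℝ} (hs : 0 ≤ s) (ht : 0 ≤ t) :
    mob w t - mob w s = (-1) ^ w.length * (t - s) /
      (((mco w).2.2.1 * t + (mco w).2.2.2) * ((mco w).2.2.1 * s + (mco w).2.2.2)) := by
  obtain ⟨h1, h2, h3, h4⟩ := mco_nonneg hw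
  have hdt : 0 < (mco w).2.2.1 * t + (mco w).2.2.2 := by positivity
  have hds : 0 < (mco w).2.2.1 * s + (mco w).2.2.2 := by positivity
  have hdet := mco_det w
  rw [mob_eq hw ht, mob_eq hw hs, div_sub_div _ _ hdt.ne' hds.ne']
  have : ((mco w).1 * t + (mco w).2.1) * ((mco w).2.2.1 * s + (mco w).2.2.2) -
      ((mco w).2.2.1 * t + (mco w).2.2.2) * ((mco w).1 * s + (mco w).2.1)
      = ((mco w).1 * (mco w).2.2.2 - (mco w).2.1 * (mco w).2.2.1) * (t - s) := by ring
  rw [this, hdet]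

lemma natfloor_cast {a : ℝ} (ha : 0 ≤ a) : ((⌊a⌋₊ : ℝ)) = (⌊a⌋ : ℝ) := by
  have h : ((⌊a⌋₊ : ℤ)) = ⌊a⌋ := by
    rw [← Int.floor_toNat]; exact Int.toNat_of_nonneg (Int.floor_nonneg.2 ha)
  exact_mod_cast congrArg (fun z : ℤ => (z : ℝ)) h

lemma step_mem {a : ℕ} (ha : 1 ≤ a) {u : ℝ} (hu : u ∈ Ioo (0:ℝ) 1) :
    ((a:ℝ) + u)⁻¹ ∈ Ioo (0:ℝ) 1 := by
  have ha' : (1:ℝ) ≤ a := by exact_mod_cast ha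
  constructor
  · apply inv_pos.2; linarith [hu.1]
  · rw [inv_lt_one_iff₀]; right; linarith [hu.1]

lemma step_floor {a : ℕ} (ha : 1 ≤ a) {u : ℝ} (hu : u ∈ Ioo (0:ℝ) 1) :
    ⌊(((a:ℝ) + u)⁻¹)⁻¹⌋₊ = a := by
  have ha' : (1:ℝ) ≤ a := by exact_mod_cast ha
  rw [inv_inv, Nat.floor_eq_iff (by linarith [hu.1])]
  refine ⟨by linarith [hu.1], by push_cast; linarith [hu.2]⟩

lemma step_gauss {a : ℕ} {u : ℝ} (hu : u ∈ Ioo (0:ℝ) 1) :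
    gaussMap (((a:ℝ) + u)⁻¹) = u := by
  rw [gaussMap, inv_inv, add_comm, Int.fract_add_natCast, Int.fract_eq_self.2 ⟨hu.1.le, hu.2⟩]

lemma step_irr {a : ℕ} {u : ℝ} (hu : Irrational u) :
    Irrational (((a:ℝ) + u)⁻¹) :=
  ((hu.natCast_add a).inv)

lemma gauss_mem {x : ℝ} (hx : x ∈ Ioo (0:ℝ) 1) (hirr : Irrational x) :
    gaussMap x ∈ Ioo (0:ℝ) 1 ∧ Irrational (gaussMap x) ∧
      x = ((cfA x 1 : ℝ) + gaussMap x)⁻¹ ∧ 1 ≤ cfA x 1 := by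
  have hx0 : 0 < x := hx.1
  have hinv : 1 < x⁻¹ := (one_lt_inv_iff₀).2 ⟨hx0, hx.2⟩
  have hinv_irr : Irrational x⁻¹ := hirr.inv
  have hfr_irr : Irrational (Int.fract x⁻¹) := by
    rw [Int.fract]
    exact hinv_irr.sub_intCast _
  have hG : gaussMap x ∈ Ioo (0:ℝ) 1 := by
    refine ⟨lt_of_le_of_ne (Int.fract_nonneg _) ?_, Int.fract_lt_one _⟩
    intro h
    exact hfr_irr.ne_int 0 (by rw [gaussMap] at h; rw [← h]; norm_num)
  have hcast : ((cfA x 1 : ℝ)) = (⌊x⁻¹⌋ : ℝ) := by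
    simp only [cfA, Function.iterate_zero, id]
    exact natfloor_cast (by positivity)
  have hsum : (cfA x 1 : ℝ) + gaussMap x = x⁻¹ := by
    rw [hcast, gaussMap, Int.fract]; ring
  refine ⟨hG, hfr_irr, by rw [hsum, inv_inv], ?_⟩
  have : (1:ℝ) ≤ x⁻¹ := hinv.le
  rw [Nat.one_le_iff_ne_zero]
  intro h0
  have : (cfA x 1 : ℝ) = 0 := by rw [h0]; norm_num
  rw [hcast] at this
  have h1 : (1:ℝ) ≤ (⌊x⁻¹⌋ : ℝ) := by exact_mod_cast Int.le_floor.2 (by exact_mod_cast hinv.le)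
  linarith

lemma cfA_shift (x : ℝ) (n : ℕ) (hn : 1 ≤ n) : cfA x (n + 1) = cfA (gaussMap x) n := by
  simp only [cfA]
  obtain ⟨m, rfl⟩ := Nat.exists_eq_add_of_le hn
  have h1 : 1 + m + 1 - 1 = (1 + m - 1) + 1 := by omega
  rw [h1, Function.iterate_succ_apply]

lemma cfA_iterate (x : ℝ) (n : ℕ) : cfA x (n + 1) = ⌊(gaussMap^[n] x)⁻¹⌋₊ := by
  simp [cfA]

lemma cfWord_length (x : ℝ) (n : ℕ) : (cfWord x n).length = n := by
  induction n generalizing x with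
  | zero => rfl
  | succ n ih => simp [cfWord, ih]

lemma cfWord_getD (x : ℝ) (n i : ℕ) (hi : i < n) :
    (cfWord x n).getD i 0 = cfA x (i + 1) := by
  induction n generalizing x i with
  | zero => omega
  | succ n ih =>
    cases i with
    | zero => simp [cfWord, cfA]
    | succ i =>
      simp only [cfWord, List.getD_cons_succ]
      rw [ih (gaussMap x) i (by omega), cfA_shift x (i+1) (by omega)]


/-- L1: parametrization of cylinders. -/
lemma mob_param {w : List ℕ} (hw : ∀ a ∈ w, 1 ≤ a) {t : ℝ} (ht : t ∈ Ioo (0:ℝ) 1)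
    (hirr : Irrational t) :
    mob w t ∈ Ioo (0:ℝ) 1 ∧ Irrational (mob w t) ∧ cfWord (mob w t) w.length = w ∧
      gaussMap^[w.length] (mob w t) = t := by
  induction w with
  | nil => exact ⟨ht, hirr, rfl, rfl⟩
  | cons a w ih =>
    obtain ⟨hmem, hmirr, hword, hiter⟩ := ih (fun b hb => hw b (List.mem_cons_of_mem a hb))
    have ha : 1 ≤ a := hw a (List.mem_cons_self)
    have hy : mob (a :: w) t = ((a:ℝ) + mob w t)⁻¹ := rfl
    have hG : gaussMap (mob (a :: w) t) = mob w t := by rw [hy]; exact step_gauss hmem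
    refine ⟨hy ▸ step_mem ha hmem, hy ▸ step_irr hmirr, ?_, ?_⟩
    · show cfWord (mob (a::w) t) (w.length + 1) = a :: w
      simp only [cfWord, hG, hword, cfA, Function.iterate_zero, id]
      rw [hy]
      norm_num
      have ha' : (1:ℝ) ≤ a := by exact_mod_cast ha
      rw [Nat.floor_eq_iff (by linarith [hmem.1])]
      exact ⟨by linarith [hmem.1], by push_cast; linarith [hmem.2]⟩
    · show gaussMap^[w.length + 1] (mob (a::w) t) = t
      rw [Function.iterate_succ_apply, hG, hiter]

/-- L2: expansion. -/
lemma cf_expand {x : ℝ} (hx : x ∈ Ioo (0:ℝ) 1) (hirr : Irrational x) (n : ℕ) :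
    mob (cfWord x n) (gaussMap^[n] x) = x ∧ gaussMap^[n] x ∈ Ioo (0:ℝ) 1 ∧
      Irrational (gaussMap^[n] x) ∧ ∀ a ∈ cfWord x n, 1 ≤ a := by
  induction n generalizing x with
  | zero => exact ⟨rfl, hx, hirr, by simp [cfWord]⟩
  | succ n ih =>
    obtain ⟨hGmem, hGirr, hxeq, ha1⟩ := gauss_mem hx hirr
    obtain ⟨heq, hmem, hirr', hall⟩ := ih hGmem hGirr
    refine ⟨?_, ?_, ?_, ?_⟩
    · show mob (cfA x 1 :: cfWord (gaussMap x) n) (gaussMap^[n+1] x) = x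
      rw [Function.iterate_succ_apply]
      show ((cfA x 1 : ℝ) + mob (cfWord (gaussMap x) n) (gaussMap^[n] (gaussMap x)))⁻¹ = x
      rw [heq, ← hxeq]
    · rw [Function.iterate_succ_apply]; exact hmem
    · rw [Function.iterate_succ_apply]; exact hirr'
    · intro b hb
      rcases List.mem_cons.1 hb with h | h
      · exact h ▸ ha1
      · exact hall b h

lemma mob_nonneg {w : List ℕ} (hw : ∀ a ∈ w, 1 ≤ a) {t : ℝ} (ht : 0 ≤ t) : 0 ≤ mob w t := by
  obtain ⟨h1, h2, h3, h4⟩ := mco_nonneg hw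
  rw [mob_eq hw ht]; positivity

lemma mob_rat (w : List ℕ) {t : ℝ} (h : ¬ Irrational t) : ¬ Irrational (mob w t) := by
  induction w with
  | nil => exact h
  | cons a w ih =>
    rw [Irrational] at ih ⊢
    push_neg at ih ⊢
    obtain ⟨q, hq⟩ := ih
    exact ⟨((a : ℚ) + q)⁻¹, by rw [mob]; push_cast [hq]; ring⟩

lemma mob_rat_rev {w : List ℕ} (hw : ∀ a ∈ w, 1 ≤ a) {t : ℝ} (ht : 0 ≤ t)
    (h : ¬ Irrational (mob w t)) : ¬ Irrational t := by
  induction w with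
  | nil => exact h
  | cons a w ih =>
    have ha : (1:ℝ) ≤ a := by exact_mod_cast hw a (List.mem_cons_self)
    have hmn : 0 ≤ mob w t := mob_nonneg (fun b hb => hw b (List.mem_cons_of_mem a hb)) ht
    have hpos : 0 < (a:ℝ) + mob w t := by linarith
    rw [Irrational] at h
    push_neg at h
    obtain ⟨q, hq⟩ := h
    rw [mob] at hq
    have hq0 : (q:ℝ) ≠ 0 := by rw [hq]; positivity
    have : mob w t = ((q⁻¹ - a : ℚ) : ℝ) := by
      push_cast
      rw [hq, inv_inv]
      ring
    refine ih (fun b hb => hw b (List.mem_cons_of_mem a hb)) ?_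
    rw [Irrational]; push_neg
    exact ⟨q⁻¹ - a, this.symm⟩

lemma mob_continuousOn {w : List ℕ} (hw : ∀ a ∈ w, 1 ≤ a) :
    ContinuousOn (mob w) (Icc (0:ℝ) 1) := by
  obtain ⟨h1, h2, h3, h4⟩ := mco_nonneg hw
  apply ContinuousOn.congr (f := fun t => ((mco w).1 * t + (mco w).2.1) /
    ((mco w).2.2.1 * t + (mco w).2.2.2))
  · apply ContinuousOn.div
    · fun_prop
    · fun_prop
    · intro t ht
      have := ht.1
      positivity
  · intro t ht
    exact mob_eq hw ht.1

lemma volume_irr_inter (S : Set ℝ) : volume ({y : ℝ | Irrational y} ∩ S) = volume S := by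
  have : {y : ℝ | Irrational y} ∩ S = S \ (Set.range ((↑) : ℚ → ℝ)) := by
    ext y; simp [Irrational, and_comm]
  rw [this, measure_diff_null ((Set.countable_range _).measure_zero _)]

lemma mob_image {w : List ℕ} (hw : ∀ a ∈ w, 1 ≤ a) {a b : ℝ} (ha : 0 ≤ a) (hab : a < b)
    (hb : b ≤ 1) :
    mob w '' ({t : ℝ | Irrational t} ∩ Ioo a b)
      = {y : ℝ | Irrational y} ∩ uIoo (mob w a) (mob w b) := by
  obtain ⟨h1, h2, h3, h4⟩ := mco_nonneg hw
  have hsub : ∀ s t : ℝ, 0 ≤ s → s < t → t ≤ 1 →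
      (Even w.length → mob w s < mob w t) ∧ (¬ Even w.length → mob w t < mob w s) := by
    intro s t hs hst ht1
    have ht0 : 0 ≤ t := hs.trans hst.le
    have hds : 0 < (mco w).2.2.1 * s + (mco w).2.2.2 := by positivity
    have hdt : 0 < (mco w).2.2.1 * t + (mco w).2.2.2 := by positivity
    constructor
    · intro he
      have : mob w t - mob w s = (t - s) / (((mco w).2.2.1 * t + (mco w).2.2.2) *
          ((mco w).2.2.1 * s + (mco w).2.2.2)) := by
        rw [mob_sub hw hs (hs.trans hst.le), he.neg_one_pow, one_mul]
      have hpos : 0 < (t - s) / (((mco w).2.2.1 * t + (mco w).2.2.2) *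
          ((mco w).2.2.1 * s + (mco w).2.2.2)) := by
        apply div_pos (by linarith) (by positivity)
      linarith
    · intro ho
      rw [Nat.not_even_iff_odd] at ho
      have : mob w t - mob w s = -((t - s) / (((mco w).2.2.1 * t + (mco w).2.2.2) *
          ((mco w).2.2.1 * s + (mco w).2.2.2))) := by
        rw [mob_sub hw hs (hs.trans hst.le), ho.neg_one_pow]; ring
      have hpos : 0 < (t - s) / (((mco w).2.2.1 * t + (mco w).2.2.2) *
          ((mco w).2.2.1 * s + (mco w).2.2.2)) := by
        apply div_pos (by linarith) (by positivity)
      linarith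
  ext y
  simp only [Set.mem_image, Set.mem_inter_iff, Set.mem_setOf_eq]
  constructor
  · rintro ⟨t, ⟨htirr, hta, htb⟩, rfl⟩
    have ht0 : 0 ≤ t := le_trans ha hta.le
    refine ⟨fun h => mob_rat_rev hw ht0 (fun hh => hh h) htirr, ?_⟩
    by_cases he : Even w.length
    · exact Set.mem_uIoo_of_lt ((hsub a t ha hta (htb.le.trans hb)).1 he)
        ((hsub t b ht0 htb hb).1 he)
    · exact Set.mem_uIoo_of_gt ((hsub t b ht0 htb hb).2 he)
        ((hsub a t ha hta (htb.le.trans hb)).2 he)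
  · rintro ⟨hyirr, hy⟩
    have hcont : ContinuousOn (mob w) (Icc a b) :=
      (mob_continuousOn hw).mono (Icc_subset_Icc ha hb)
    have : y ∈ mob w '' (Ioo a b) := by
      rcases le_or_gt (mob w a) (mob w b) with h | h
      · rw [Set.uIoo_of_le h] at hy
        exact intermediate_value_Ioo hab.le hcont hy
      · rw [Set.uIoo_of_gt h] at hy
        exact intermediate_value_Ioo' hab.le hcont hy
    obtain ⟨t, htm, rfl⟩ := this
    exact ⟨t, ⟨fun h => mob_rat w (fun hh => hh h) hyirr, htm⟩, rfl⟩

lemma volume_mob_image {w : List ℕ} (hw : ∀ a ∈ w, 1 ≤ a) {a b : ℝ} (ha : 0 ≤ a) (hab : a < b)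
    (hb : b ≤ 1) :
    volume (mob w '' ({t : ℝ | Irrational t} ∩ Ioo a b))
      = ENNReal.ofReal ((b - a) / (((mco w).2.2.1 * b + (mco w).2.2.2) *
          ((mco w).2.2.1 * a + (mco w).2.2.2))) := by
  obtain ⟨h1, h2, h3, h4⟩ := mco_nonneg hw
  rw [mob_image hw ha hab hb, volume_irr_inter, uIoo, Real.volume_Ioo]
  congr 1
  rw [max_sub_min_eq_abs]
  have hb0 : 0 ≤ b := ha.trans hab.le
  have hda : 0 < (mco w).2.2.1 * a + (mco w).2.2.2 := by positivity
  have hdb : 0 < (mco w).2.2.1 * b + (mco w).2.2.2 := by positivity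
  rw [mob_sub hw ha (ha.trans hab.le), abs_div, abs_mul, abs_pow, abs_neg, abs_one, one_pow,
    one_mul, abs_of_pos (by linarith : (0:ℝ) < b - a), abs_of_pos (mul_pos hdb hda)]

lemma cylP_eq {w : List ℕ} (hw : ∀ a ∈ w, 1 ≤ a) (P : ℕ → Prop) :
    cyl w ∩ {x | P (cfA x (w.length + 1))}
      = mob w '' ({t : ℝ | Irrational t} ∩ Ioo 0 1 ∩ {t | P ⌊t⁻¹⌋₊}) := by
  ext x
  constructor
  · rintro ⟨⟨hx, hirr, hword⟩, hP⟩
    obtain ⟨heq, hmem, hirr', _⟩ := cf_expand hx hirr w.length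
    rw [hword] at heq
    refine ⟨gaussMap^[w.length] x, ⟨⟨hirr', hmem⟩, ?_⟩, heq⟩
    show P ⌊(gaussMap^[w.length] x)⁻¹⌋₊
    exact cfA_iterate x w.length ▸ hP
  · rintro ⟨t, ⟨⟨htirr, htm⟩, hP⟩, rfl⟩
    obtain ⟨hmem, hirr, hword, hiter⟩ := mob_param hw htm htirr
    refine ⟨⟨hmem, hirr, hword⟩, ?_⟩
    show P (cfA (mob w t) (w.length + 1))
    rw [cfA_iterate, hiter]
    exact hP

lemma cyl_eq {w : List ℕ} (hw : ∀ a ∈ w, 1 ≤ a) :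
    cyl w = mob w '' ({t : ℝ | Irrational t} ∩ Ioo 0 1) := by
  have := cylP_eq hw (fun _ => True)
  simpa using this

lemma measurable_irr : MeasurableSet {y : ℝ | Irrational y} := by
  have : {y : ℝ | Irrational y} = (Set.range ((↑) : ℚ → ℝ))ᶜ := by ext y; simp [Irrational]
  rw [this]
  exact (Set.Countable.measurableSet (Set.countable_range _)).compl

lemma cyl_measurable {w : List ℕ} (hw : ∀ a ∈ w, 1 ≤ a) : MeasurableSet (cyl w) := by
  rw [cyl_eq hw, mob_image hw le_rfl one_pos le_rfl]
  exact measurable_irr.inter measurableSet_Ioo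

lemma volume_cyl {w : List ℕ} (hw : ∀ a ∈ w, 1 ≤ a) :
    volume (cyl w) = ENNReal.ofReal
      (1 / (((mco w).2.2.1 + (mco w).2.2.2) * (mco w).2.2.2)) := by
  rw [cyl_eq hw, volume_mob_image hw le_rfl one_pos le_rfl]
  norm_num

lemma volume_cyl_lt {w : List ℕ} (hw : ∀ a ∈ w, 1 ≤ a) {φ : ℝ} (hφ : 1 < φ) :
    volume (cyl w ∩ {x | ((cfA x (w.length + 1) : ℝ)) < φ})
      ≤ ENNReal.ofReal (1 - 1/(2*φ)) * volume (cyl w) := by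
  obtain ⟨h1, h2, h3, h4⟩ := mco_nonneg hw
  set A : ℕ := ⌈φ⌉₊ with hA
  have hφ0 : (0:ℝ) < φ := by linarith
  have hA2 : 2 ≤ A := Nat.lt_ceil.mpr (by exact_mod_cast hφ)
  have hA0 : (0:ℝ) < A := by positivity
  have hAinv1 : (A:ℝ)⁻¹ < 1 := by
    rw [inv_lt_one_iff₀]; right; exact_mod_cast Nat.lt_of_lt_of_le one_lt_two hA2
  have hAinv0 : (0:ℝ) < (A:ℝ)⁻¹ := by positivity
  have hAle : (A:ℝ) < φ + 1 := Nat.ceil_lt_add_one hφ0.le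
  have hA2φ : (A:ℝ) ≤ 2 * φ := by linarith
  have hset : {t : ℝ | Irrational t} ∩ Ioo 0 1 ∩ {t : ℝ | ((⌊t⁻¹⌋₊ : ℝ)) < φ}
      = {t : ℝ | Irrational t} ∩ Ioo ((A:ℝ)⁻¹) 1 := by
    ext t
    simp only [Set.mem_inter_iff, Set.mem_setOf_eq, Set.mem_Ioo]
    constructor
    · rintro ⟨⟨htirr, ht0, ht1⟩, hflt⟩
      have hinv0 : (0:ℝ) ≤ t⁻¹ := by positivity
      have h1 : (⌊t⁻¹⌋₊ : ℝ) < (A:ℝ) := lt_of_lt_of_le hflt (Nat.le_ceil φ)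
      have h2 : ⌊t⁻¹⌋₊ < A := by exact_mod_cast h1
      have h3 : t⁻¹ < (A:ℝ) :=
        lt_of_lt_of_le (Nat.lt_floor_add_one t⁻¹) (by exact_mod_cast Nat.succ_le_of_lt h2)
      exact ⟨htirr, (inv_lt_comm₀ hA0 ht0).mpr h3, ht1⟩
    · rintro ⟨htirr, htA, ht1⟩
      have ht0 : 0 < t := lt_trans hAinv0 htA
      have h3 : t⁻¹ < (A:ℝ) := (inv_lt_comm₀ ht0 hA0).mpr htA
      have h2 : ⌊t⁻¹⌋₊ < A := Nat.floor_lt (by positivity) |>.mpr h3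
      have h4 : (⌊t⁻¹⌋₊ : ℝ) + 1 ≤ (A:ℝ) := by exact_mod_cast Nat.succ_le_of_lt h2
      exact ⟨⟨htirr, ht0, ht1⟩, by linarith⟩
  rw [cylP_eq hw (fun k => ((k : ℝ)) < φ), hset, volume_mob_image hw hAinv0.le hAinv1 le_rfl,
    volume_cyl hw, ← ENNReal.ofReal_mul (by
      have : (2*φ)⁻¹ < 1 := by rw [inv_lt_one_iff₀]; right; linarith
      rw [one_div]; linarith)]
  apply ENNReal.ofReal_le_ofReal
  have hga : (mco w).2.2.2 ≤ (mco w).2.2.1 * (A:ℝ)⁻¹ + (mco w).2.2.2 := by nlinarith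
  have hd1 : 0 < ((mco w).2.2.1 + (mco w).2.2.2) * (mco w).2.2.2 := by positivity
  have h2φinv : (2*φ)⁻¹ ≤ (A:ℝ)⁻¹ := by
    apply inv_anti₀ hA0 hA2φ
  have hnum : 1 - (A:ℝ)⁻¹ ≤ 1 - 1/(2*φ) := by rw [one_div]; linarith
  have hden : ((mco w).2.2.1 + (mco w).2.2.2) * (mco w).2.2.2
      ≤ ((mco w).2.2.1 * 1 + (mco w).2.2.2) * ((mco w).2.2.1 * (A:ℝ)⁻¹ + (mco w).2.2.2) := by
    nlinarith
  calc (1 - (A:ℝ)⁻¹) / (((mco w).2.2.1 * 1 + (mco w).2.2.2) *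
        ((mco w).2.2.1 * (A:ℝ)⁻¹ + (mco w).2.2.2))
      ≤ (1 - 1/(2*φ)) / (((mco w).2.2.1 + (mco w).2.2.2) * (mco w).2.2.2) := by
        apply div_le_div₀ (by rw [one_div]; nlinarith [h2φinv]) hnum hd1 hden
    _ = (1 - 1/(2*φ)) * (1 / (((mco w).2.2.1 + (mco w).2.2.2) * (mco w).2.2.2)) := by
        rw [mul_one_div]

lemma bad_eq (Φ : ℕ → ℝ) {N : ℕ} (hN : 1 ≤ N) (m : ℕ) :
    Bad Φ N m = ⋃ w ∈ Words Φ N m, cyl w := by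
  ext x
  simp only [Set.mem_iUnion, exists_prop]
  constructor
  · rintro ⟨hx, hirr, hbound⟩
    refine ⟨cfWord x m, ⟨cfWord_length x m, (cf_expand hx hirr m).2.2.2, ?_⟩,
      hx, hirr, by rw [cfWord_length]⟩
    intro i hi hNi
    rw [cfWord_getD x m i hi]
    exact hbound (i+1) hNi (by omega)
  · rintro ⟨w, ⟨hlen, hall, hbound⟩, hx, hirr, hword⟩
    refine ⟨hx, hirr, fun n hNn hnm => ?_⟩
    obtain ⟨i, rfl⟩ : ∃ i, n = i + 1 := ⟨n - 1, by omega⟩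
    rw [← cfWord_getD x m i (by omega), ← hlen] at *
    rw [hword]
    exact hbound i (by omega) hNn

lemma volume_bad (Φ : ℕ → ℝ) {N : ℕ} (hN : 1 ≤ N) (m : ℕ) :
    volume (Bad Φ N m) = ∑' w : Words Φ N m, volume (cyl w) := by
  rw [bad_eq Φ hN m]
  exact measure_biUnion (Set.to_countable _)
    (fun w hw w' hw' hne => Set.disjoint_left.2 (fun x hxw hxw' => hne (by
      have h1 := hxw.2.2
      have h2 := hxw'.2.2
      rw [hw.1, ← hw'.1] at h1
      exact h1.symm.trans h2)))
    (fun w hw => cyl_measurable hw.2.1)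

lemma volume_bad_succ (Φ : ℕ → ℝ) {N : ℕ} (hN : 1 ≤ N) {m : ℕ} (hm : N ≤ m + 1)
    (hφ : 1 < Φ (m + 1)) :
    volume (Bad Φ N (m + 1)) ≤ ENNReal.ofReal (1 - 1/(2 * Φ (m + 1))) * volume (Bad Φ N m) := by
  have hsub : Bad Φ N (m + 1) ⊆
      ⋃ w ∈ Words Φ N m, (cyl w ∩ {x | ((cfA x (m + 1) : ℝ)) < Φ (m + 1)}) := by
    intro x hx
    have hx' : x ∈ Bad Φ N m :=
      ⟨hx.1, hx.2.1, fun n h1 h2 => hx.2.2 n h1 (by omega)⟩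
    rw [bad_eq Φ hN m] at hx'
    simp only [Set.mem_iUnion, exists_prop] at hx' ⊢
    obtain ⟨w, hw, hxw⟩ := hx'
    exact ⟨w, hw, hxw, hx.2.2 (m+1) hm le_rfl⟩
  calc volume (Bad Φ N (m + 1))
      ≤ ∑' w : Words Φ N m, volume (cyl ↑w ∩ {x | ((cfA x (m + 1) : ℝ)) < Φ (m + 1)}) :=
        le_trans (measure_mono hsub) (measure_biUnion_le _ (Set.to_countable _) _)
    _ ≤ ∑' w : Words Φ N m, ENNReal.ofReal (1 - 1/(2 * Φ (m + 1))) * volume (cyl ↑w) := by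
        apply ENNReal.tsum_le_tsum
        intro w
        have := volume_cyl_lt w.2.2.1 hφ
        rwa [w.2.1] at this
    _ = ENNReal.ofReal (1 - 1/(2 * Φ (m + 1))) * volume (Bad Φ N m) := by
        rw [ENNReal.tsum_mul_left, volume_bad Φ hN m]

lemma volume_bad_prod (Φ : ℕ → ℝ) {N : ℕ} (hN : 1 ≤ N) (hΦ1 : ∀ n, N ≤ n → 1 < Φ n)
    {m : ℕ} (hm : N ≤ m) :
    volume (Bad Φ N m) ≤ ∏ k ∈ Finset.Ioc N m, ENNReal.ofReal (1 - 1/(2 * Φ k)) := by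
  induction m, hm using Nat.le_induction with
  | base =>
    rw [Finset.Ioc_self, Finset.prod_empty]
    calc volume (Bad Φ N N) ≤ volume (Ioo (0:ℝ) 1) := measure_mono (fun x hx => hx.1)
      _ = 1 := by rw [Real.volume_Ioo]; norm_num
  | succ m hm ih =>
    calc volume (Bad Φ N (m+1))
        ≤ ENNReal.ofReal (1 - 1/(2 * Φ (m + 1))) * volume (Bad Φ N m) :=
          volume_bad_succ Φ hN (by omega) (hΦ1 (m+1) (by omega))
      _ ≤ ENNReal.ofReal (1 - 1/(2 * Φ (m + 1))) *
            ∏ k ∈ Finset.Ioc N m, ENNReal.ofReal (1 - 1/(2 * Φ k)) :=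
          mul_le_mul_right ih _
      _ = ∏ k ∈ Finset.Ioc N (m+1), ENNReal.ofReal (1 - 1/(2 * Φ k)) := by
          rw [Finset.prod_Ioc_succ_top hm, mul_comm]

lemma volume_D_null (Φ : ℕ → ℝ) (hΦ : ∀ n, 0 < Φ n)
    (hsum : ¬ Summable (fun n => 1 / Φ n)) {N : ℕ} (hN : 1 ≤ N)
    (hΦ1 : ∀ n, N ≤ n → 1 < Φ n) :
    volume {x : ℝ | x ∈ Ioo (0:ℝ) 1 ∧ Irrational x ∧
      ∀ n, N ≤ n → ((cfA x n : ℝ)) < Φ n} = 0 := by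
  set D := {x : ℝ | x ∈ Ioo (0:ℝ) 1 ∧ Irrational x ∧ ∀ n, N ≤ n → ((cfA x n : ℝ)) < Φ n}
  have hsub : ∀ m, D ⊆ Bad Φ N m := fun m x hx => ⟨hx.1, hx.2.1, fun n h1 _ => hx.2.2 n h1⟩
  -- the sums tend to infinity
  have hg : ∀ n, 0 ≤ 1/(2 * Φ n) := fun n => by have := hΦ n; positivity
  have hgsum : ¬ Summable (fun n => 1/(2 * Φ n)) := by
    intro h
    apply hsum
    have := h.mul_left 2
    apply this.congr
    intro n
    have hne := (hΦ n).ne'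
    field_simp
  have htend : Tendsto (fun m => ∑ k ∈ Finset.range m, 1/(2 * Φ k)) atTop atTop :=
    (not_summable_iff_tendsto_nat_atTop_of_nonneg hg).1 hgsum
  have htend2 : Tendsto (fun m => ∑ k ∈ Finset.Ioc N m, 1/(2 * Φ k)) atTop atTop := by
    have heq : ∀ m, N ≤ m → ∑ k ∈ Finset.Ioc N m, 1/(2 * Φ k)
        = ∑ k ∈ Finset.range (m+1), 1/(2 * Φ k) - ∑ k ∈ Finset.range (N+1), 1/(2 * Φ k) := by
      intro m hm
      rw [eq_sub_iff_add_eq, ← Finset.Ico_succ_succ_eq_Ioc, Order.succ_eq_add_one, Order.succ_eq_add_one,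
        Finset.range_eq_Ico, add_comm, Finset.range_eq_Ico]
      exact Finset.sum_Ico_consecutive _ (by omega) (by omega)
    apply Tendsto.congr' (f₁ := fun m => ∑ k ∈ Finset.range (m+1), 1/(2 * Φ k)
      - ∑ k ∈ Finset.range (N+1), 1/(2 * Φ k))
    · filter_upwards [eventually_ge_atTop N] with m hm using (heq m hm).symm
    · exact (htend.comp (tendsto_add_atTop_nat 1)).atTop_add tendsto_const_nhds
  -- the product bound tends to 0
  have hbound : ∀ᶠ m in atTop, volume D ≤
      ENNReal.ofReal (Real.exp (-∑ k ∈ Finset.Ioc N m, 1/(2 * Φ k))) := by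
    filter_upwards [eventually_ge_atTop N] with m hm
    refine le_trans (measure_mono (hsub m)) (le_trans (volume_bad_prod Φ hN hΦ1 hm) ?_)
    rw [← Finset.sum_neg_distrib, Real.exp_sum,
      ENNReal.ofReal_prod_of_nonneg (fun i _ => (Real.exp_pos _).le)]
    apply Finset.prod_le_prod' 
    intro k hk
    exact ENNReal.ofReal_le_ofReal (by linarith [Real.add_one_le_exp (-(1/(2 * Φ k)))])
  have hlim : Tendsto (fun m => ENNReal.ofReal
      (Real.exp (-∑ k ∈ Finset.Ioc N m, 1/(2 * Φ k)))) atTop (𝓝 0) := by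
    have h1 : Tendsto (fun m => Real.exp (-∑ k ∈ Finset.Ioc N m, 1/(2 * Φ k))) atTop (𝓝 0) :=
      Real.tendsto_exp_neg_atTop_nhds_zero.comp htend2
    have := ENNReal.tendsto_ofReal h1
    simpa using this
  exact le_zero_iff.1 (ge_of_tendsto hlim hbound)

lemma cfA_ge_one {x : ℝ} (hx : x ∈ Ioo (0:ℝ) 1) (hirr : Irrational x) {n : ℕ} (hn : 1 ≤ n) :
    1 ≤ cfA x n := by
  obtain ⟨i, rfl⟩ : ∃ i, n = i + 1 := ⟨n - 1, by omega⟩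
  obtain ⟨-, hmem, hirr', -⟩ := cf_expand hx hirr i
  have h := (gauss_mem hmem hirr').2.2.2
  have : cfA (gaussMap^[i] x) 1 = ⌊(gaussMap^[i] x)⁻¹⌋₊ := by simp [cfA]
  rw [this] at h
  rwa [cfA_iterate]

/-- Borel–Bernstein (divergence half): if `∑ 1/Φ(n)` diverges then
`E(Φ) = {x ∈ [0,1) : aₙ(x) ≥ Φ(n) for infinitely many n}` has Lebesgue measure 1. -/
theorem borel_bernstein_divergence (Φ : ℕ → ℝ) (hΦ : ∀ n, 0 < Φ n)
    (hsum : ¬ Summable (fun n => 1 / Φ n)) :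
    volume {x ∈ Set.Ico (0 : ℝ) 1 | ∃ᶠ n in atTop, Φ n ≤ (cfA x n : ℝ)} = 1 := by
  set T := {x ∈ Set.Ico (0 : ℝ) 1 | ∃ᶠ n in atTop, Φ n ≤ (cfA x n : ℝ)} with hT
  set S := Set.Ico (0:ℝ) 1 \ T with hS
  have hSnull : volume S = 0 := by
    by_cases hcase : ∃ N₀, ∀ n, N₀ ≤ n → 1 < Φ n
    · obtain ⟨N₀, hN₀⟩ := hcase
      have hsub : S ⊆ ({0} : Set ℝ) ∪ (Set.range ((↑) : ℚ → ℝ)) ∪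
          ⋃ (N : ℕ), {x : ℝ | x ∈ Ioo (0:ℝ) 1 ∧ Irrational x ∧
            ∀ n, N + N₀ + 1 ≤ n → ((cfA x n : ℝ)) < Φ n} := by
        rintro x ⟨⟨hx0, hx1⟩, hxT⟩
        rcases eq_or_ne x 0 with rfl | hne
        · exact Or.inl (Or.inl rfl)
        rcases Classical.em (Irrational x) with hirr | hrat
        · have hfreq : ¬ ∃ᶠ n in atTop, Φ n ≤ (cfA x n : ℝ) := fun h => hxT ⟨⟨hx0, hx1⟩, h⟩
          rw [not_frequently] at hfreq
          simp only [not_le] at hfreq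
          obtain ⟨N, hN⟩ := eventually_atTop.1 hfreq
          refine Or.inr (Set.mem_iUnion.2 ⟨N, ⟨⟨lt_of_le_of_ne hx0 (Ne.symm hne), hx1⟩, hirr,
            fun n hn => hN n (by omega)⟩⟩)
        · exact Or.inl (Or.inr (by rwa [Irrational, not_not] at hrat))
      refine measure_mono_null hsub ?_
      refine measure_union_null (measure_union_null ?_ ?_) ?_
      · exact measure_singleton 0
      · exact (Set.countable_range _).measure_zero _
      · exact measure_iUnion_null fun N =>
          volume_D_null Φ hΦ hsum (by omega) (fun n hn => hN₀ n (by omega))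
    · push_neg at hcase
      have hsub : S ⊆ ({0} : Set ℝ) ∪ (Set.range ((↑) : ℚ → ℝ)) := by
        rintro x ⟨⟨hx0, hx1⟩, hxT⟩
        rcases eq_or_ne x 0 with rfl | hne
        · exact Or.inl rfl
        rcases Classical.em (Irrational x) with hirr | hrat
        · exfalso
          apply hxT
          refine ⟨⟨hx0, hx1⟩, frequently_atTop.2 fun M => ?_⟩
          obtain ⟨n, hn, hΦn⟩ := hcase (max M 1)
          refine ⟨n, le_trans (le_max_left M 1) hn, le_trans hΦn ?_⟩
          exact_mod_cast cfA_ge_one ⟨lt_of_le_of_ne hx0 (Ne.symm hne), hx1⟩ hirr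
            (le_trans (le_max_right M 1) hn)
        · exact Or.inr (by rwa [Irrational, not_not] at hrat)
      exact measure_mono_null hsub
        (measure_union_null (measure_singleton 0) ((Set.countable_range _).measure_zero _))
  have hTeq : T = Set.Ico (0:ℝ) 1 \ S := by
    rw [hS, Set.diff_diff_cancel_left (fun x hx => hx.1)]
  rw [hTeq, measure_diff_null hSnull, Real.volume_Ico]
  norm_num
end

section
/- For irrational α ∈ (0,1) with continued fraction α = [0; a_1, a_2, ...] and first convergent denominator q_1 = a_1, for every integer N with 2 ≤ N ≤ q_1, the points {0}, {α}, ..., {(N-1)α}, 1 partition [0,1] into intervals of exactly two distinct lengths, and moreover the increasing rearrangement satisfies u_j = j - 1 for j = 1, ..., N. -/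
open Set

/-- The partition points `{0·α}, {1·α}, …, {(N-1)·α}` together with `1`. -/
noncomputable def cfPoints (α : ℝ) (N : ℕ) : Set ℝ :=
  insert 1 ((fun k : ℕ => Int.fract (k * α)) '' Set.Iio N)

/-- The set of gap lengths between consecutive points of `cfPoints α N`. -/
noncomputable def gaps (α : ℝ) (N : ℕ) : Set ℝ :=
  {d | ∃ x ∈ cfPoints α N, ∃ y ∈ cfPoints α N,
    x < y ∧ (∀ z ∈ cfPoints α N, z ≤ x ∨ y ≤ z) ∧ d = y - x}

/-- For `2 ≤ N ≤ q₁ = a₁`, the points `{0}, {α}, …, {(N-1)α}, 1` partition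
`[0,1]` into exactly two distinct gap lengths, and the points `{jα}` for
`j < N` are already in increasing order (i.e. `u_j = j - 1`). -/
theorem first_round_two_gaps (α : ℝ) (hirr : Irrational α)
    (h0 : 0 < α) (h1 : α < 1) (N : ℕ) (hN2 : 2 ≤ N) (hNq : N ≤ cfQ α 1) :
    (gaps α N).ncard = 2 ∧
      ∀ j k : ℕ, j < k → k < N →
        Int.fract ((j : ℝ) * α) < Int.fract ((k : ℝ) * α) := by
  have hq : cfQ α 1 = ⌊α⁻¹⌋₊ := by simp [cfQ, cfA, gaussMap]
  have hNle : (N : ℝ) ≤ α⁻¹ := by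
    calc (N : ℝ) ≤ (⌊α⁻¹⌋₊ : ℝ) := by exact_mod_cast hq ▸ hNq
    _ ≤ α⁻¹ := Nat.floor_le (by positivity)
  have hNa_le : (N : ℝ) * α ≤ 1 := by
    have := mul_le_mul_of_nonneg_right hNle h0.le
    rwa [inv_mul_cancel₀ h0.ne'] at this
  have hNa_ne : (N : ℝ) * α ≠ 1 := by
    intro h
    have hN0 : (N : ℝ) ≠ 0 := by positivity
    exact hirr ⟨(N : ℚ)⁻¹, by push_cast; field_simp; linarith [h]⟩
  have hNa : (N : ℝ) * α < 1 := lt_of_le_of_ne hNa_le hNa_ne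
  have hklt : ∀ k : ℕ, k < N → (k : ℝ) * α < 1 := fun k hk =>
    lt_trans (by exact mul_lt_mul_of_pos_right (by exact_mod_cast hk) h0) hNa
  have hfr : ∀ k : ℕ, k < N → Int.fract ((k : ℝ) * α) = (k : ℝ) * α := fun k hk =>
    Int.fract_eq_self.2 ⟨by positivity, hklt k hk⟩
  have hmem : ∀ x, x ∈ cfPoints α N ↔ x = 1 ∨ ∃ k, k < N ∧ x = (k : ℝ) * α := by
    intro x
    simp only [cfPoints, Set.mem_insert_iff, Set.mem_image, Set.mem_Iio]
    constructor
    · rintro (h | ⟨k, hk, rfl⟩)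
      · exact Or.inl h
      · exact Or.inr ⟨k, hk, hfr k hk⟩
    · rintro (h | ⟨k, hk, rfl⟩)
      · exact Or.inl h
      · exact Or.inr ⟨k, hk, hfr k hk⟩
  set M : ℕ := N - 1 with hMdef
  have hMN : N = M + 1 := by omega
  have hM : M < N := by omega
  have hMa : (M : ℝ) * α < 1 := hklt M hM
  have hne : α ≠ 1 - (M : ℝ) * α := by
    intro h
    apply hNa_ne
    have : (N : ℝ) = M + 1 := by exact_mod_cast hMN
    rw [this]; linarith
  have hgaps : gaps α N = {α, 1 - (M : ℝ) * α} := by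
    ext d
    simp only [gaps, Set.mem_setOf_eq, Set.mem_insert_iff, Set.mem_singleton_iff]
    constructor
    · rintro ⟨x, hx, y, hy, hxy, hsep, rfl⟩
      rw [hmem] at hx hy
      rcases hy with rfl | ⟨k, hk, rfl⟩
      · rcases hx with rfl | ⟨j, hj, rfl⟩
        · exact absurd hxy (lt_irrefl 1)
        · -- y = 1, x = jα, need j = M
          have hjM : j = M := by
            by_contra hne'
            have hjM' : j < M := by omega
            have hz := hsep ((M : ℝ) * α) ((hmem _).2 (Or.inr ⟨M, hM, rfl⟩))
            rcases hz with hz | hz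
            · have : (j : ℝ) * α < (M : ℝ) * α :=
                mul_lt_mul_of_pos_right (by exact_mod_cast hjM') h0
              linarith
            · linarith
          subst hjM
          exact Or.inr rfl
      · rcases hx with rfl | ⟨j, hj, rfl⟩
        · have : (k : ℝ) * α < 1 := hklt k hk
          linarith
        · have hjk : j < k := by
            by_contra hne'
            have : (k : ℝ) * α ≤ (j : ℝ) * α :=
              mul_le_mul_of_nonneg_right (by exact_mod_cast Nat.le_of_not_lt (by omega)) h0.le
            linarith
          have hkj : k = j + 1 := by
            by_contra hne'
            have hj1 : j + 1 < k := by omega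
            have hz := hsep ((j + 1 : ℕ) * α) ((hmem _).2 (Or.inr ⟨j + 1, by omega, rfl⟩))
            rcases hz with hz | hz
            · have : (j : ℝ) * α < ((j + 1 : ℕ) : ℝ) * α :=
                mul_lt_mul_of_pos_right (by exact_mod_cast Nat.lt_succ_self j) h0
              linarith
            · have : ((j + 1 : ℕ) : ℝ) * α < (k : ℝ) * α :=
                mul_lt_mul_of_pos_right (by exact_mod_cast hj1) h0
              linarith
          subst hkj
          left
          push_cast
          ring
    · rintro (hd | hd)
      · rw [hd]
        refine ⟨0, (hmem _).2 (Or.inr ⟨0, by omega, by norm_num⟩),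
          α, (hmem _).2 (Or.inr ⟨1, by omega, by norm_num⟩), by linarith, ?_, by ring⟩
        intro z hz
        rcases (hmem _).1 hz with rfl | ⟨k, hk, rfl⟩
        · exact Or.inr h1.le
        · rcases Nat.eq_zero_or_pos k with rfl | hk0
          · left; norm_num
          · right
            calc α = (1 : ℝ) * α := (one_mul α).symm
            _ ≤ (k : ℝ) * α := mul_le_mul_of_nonneg_right (by exact_mod_cast hk0) h0.le
      · rw [hd]
        refine ⟨(M : ℝ) * α, (hmem _).2 (Or.inr ⟨M, hM, rfl⟩),
          1, (hmem _).2 (Or.inl rfl), hMa, ?_, by ring⟩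
        intro z hz
        rcases (hmem _).1 hz with rfl | ⟨k, hk, rfl⟩
        · exact Or.inr le_rfl
        · left
          exact mul_le_mul_of_nonneg_right (by exact_mod_cast (by omega : k ≤ M)) h0.le
  constructor
  · rw [hgaps]
    exact Set.ncard_pair hne
  · intro j k hjk hkN
    rw [hfr j (hjk.trans hkN), hfr k hkN]
    exact mul_lt_mul_of_pos_right (by exact_mod_cast hjk) h0
end

section
/- If α ∈ (0,1) is a quadratic irrational, then lim_{N→∞} (1/N) · #{1 ≤ n ≤ N : the points {0}, {α}, ..., {(n-1)α}, 1 partition [0,1] into exactly two distinct gap lengths} = 0. -/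
open Set

open Filter
open scoped Classical

noncomputable def ff (α : ℝ) (k : ℕ) : ℝ := Int.fract (k * α)



section pts
variable {α : ℝ} {n : ℕ}

lemma mem_cfPoints_iff {x : ℝ} : x ∈ cfPoints α n ↔ x = 1 ∨ ∃ k < n, ff α k = x := by
  simp [cfPoints, ff, Set.mem_image]

lemma one_mem_cfPoints : (1:ℝ) ∈ cfPoints α n := by simp [cfPoints]

lemma ff_mem_cfPoints {k : ℕ} (hk : k < n) : ff α k ∈ cfPoints α n :=
  mem_cfPoints_iff.mpr (Or.inr ⟨k, hk, rfl⟩)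

lemma cfPoints_finite : (cfPoints α n).Finite := by
  apply Set.Finite.insert
  exact Set.Finite.image _ (Set.finite_Iio n)

lemma gaps_finite : (gaps α n).Finite := by
  apply Set.Finite.subset (Set.Finite.image2 (fun x y => y - x) cfPoints_finite cfPoints_finite)
  rintro d ⟨x, hx, y, hy, _, _, rfl⟩
  exact Set.mem_image2_of_mem hx hy

lemma gap_mem {x y : ℝ} (hx : x ∈ cfPoints α n) (hy : y ∈ cfPoints α n) (hxy : x < y)
    (hcons : ∀ z ∈ cfPoints α n, z ≤ x ∨ y ≤ z) : y - x ∈ gaps α n :=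
  ⟨x, hx, y, hy, hxy, hcons, rfl⟩

lemma exists_next {x : ℝ} (hx : x < 1) :
    ∃ y ∈ cfPoints α n, x < y ∧ ∀ z ∈ cfPoints α n, z ≤ x ∨ y ≤ z := by
  have hQfin : ({z ∈ cfPoints α n | x < z}).Finite :=
    cfPoints_finite.subset (Set.sep_subset _ _)
  have hQne : ({z ∈ cfPoints α n | x < z}).Nonempty := ⟨1, one_mem_cfPoints, hx⟩
  obtain ⟨y, ⟨hy1, hy2⟩, hmin⟩ := Set.exists_min_image _ id hQfin hQne
  refine ⟨y, hy1, hy2, fun z hz => ?_⟩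
  rcases le_or_gt z x with h | h
  · exact Or.inl h
  · exact Or.inr (hmin z ⟨hz, h⟩)

end pts



section basic
variable {α : ℝ} (hirr : Irrational α)

lemma ff_nonneg (k : ℕ) : 0 ≤ ff α k := Int.fract_nonneg _
lemma ff_lt_one (k : ℕ) : ff α k < 1 := Int.fract_lt_one _
lemma ff_zero : ff α 0 = 0 := by simp [ff]

include hirr in
lemma not_int_mul (m : ℤ) (hm : m ≠ 0) (z : ℤ) : (m : ℝ) * α ≠ z := by
  intro h
  apply hirr
  refine ⟨(z : ℚ) / (m : ℚ), ?_⟩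
  have hm' : (m : ℝ) ≠ 0 := Int.cast_ne_zero.mpr hm
  push_cast
  field_simp
  linarith [h]

include hirr in
lemma ff_pos {k : ℕ} (hk : 1 ≤ k) : 0 < ff α k := by
  rcases lt_or_eq_of_le (ff_nonneg (α := α) k) with h | h
  · exact h
  · exfalso
    have hh : (k : ℝ) * α = (⌊(k : ℝ) * α⌋ : ℤ) := by
      unfold ff Int.fract at h; linarith [h.symm]
    have hk0 : (k : ℤ) ≠ 0 := by exact_mod_cast Nat.one_le_iff_ne_zero.mp hk
    exact not_int_mul hirr k hk0 _ (by push_cast; push_cast at hh; linarith)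

include hirr in
lemma ff_inj {j k : ℕ} (h : ff α j = ff α k) : j = k := by
  by_contra hne
  unfold ff Int.fract at h
  have hgl : (((j : ℤ) - (k : ℤ) : ℤ) : ℝ) * α = ((⌊(j:ℝ)*α⌋ - ⌊(k:ℝ)*α⌋ : ℤ) : ℝ) := by
    push_cast; linarith
  exact not_int_mul hirr ((j:ℤ) - k) (by
    simp only [sub_ne_zero]; exact_mod_cast hne) _ hgl

lemma ff_add_int (j k : ℕ) : ∃ z : ℤ, ff α (j + k) = ff α j + ff α k + z := by
  refine ⟨⌊(j:ℝ)*α⌋ + ⌊(k:ℝ)*α⌋ - ⌊((j+k : ℕ):ℝ)*α⌋, ?_⟩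
  unfold ff Int.fract
  push_cast
  ring

lemma ff_add_of_lt {j k : ℕ} (h : ff α j + ff α k < 1) :
    ff α (j + k) = ff α j + ff α k := by
  obtain ⟨z, hz⟩ := ff_add_int (α := α) j k
  have h1 := ff_nonneg (α := α) (j + k)
  have h2 := ff_lt_one (α := α) (j + k)
  have h3 := ff_nonneg (α := α) j
  have h4 := ff_nonneg (α := α) k
  have hz0 : z = 0 := by
    have e1 : (-1 : ℝ) < z := by linarith
    have e2 : (z : ℝ) < 1 := by linarith
    have e1' : (-1 : ℤ) < z := by exact_mod_cast e1
    have e2' : z < 1 := by exact_mod_cast e2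
    omega
  rw [hz0] at hz; simpa using hz

lemma ff_add_of_ge {j k : ℕ} (h : 1 ≤ ff α j + ff α k) :
    ff α (j + k) = ff α j + ff α k - 1 := by
  obtain ⟨z, hz⟩ := ff_add_int (α := α) j k
  have h1 := ff_nonneg (α := α) (j + k)
  have h2 := ff_lt_one (α := α) (j + k)
  have h3 := ff_lt_one (α := α) j
  have h4 := ff_lt_one (α := α) k
  have hz0 : z = -1 := by
    have e1 : (-2 : ℝ) < z := by linarith
    have e2 : (z : ℝ) < 0 := by linarith
    have e1' : (-2 : ℤ) < z := by exact_mod_cast e1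
    have e2' : z < 0 := by exact_mod_cast e2
    omega
  rw [hz0] at hz; push_cast at hz; linarith

end basic


section bad
variable {α : ℝ} (hirr : Irrational α)

include hirr in
lemma not_int_mul' (m : ℤ) (hm : m ≠ 0) (z : ℤ) : (m : ℝ) * α ≠ z := by
  intro h
  apply hirr
  refine ⟨(z : ℚ) / (m : ℚ), ?_⟩
  have hm' : (m : ℝ) ≠ 0 := Int.cast_ne_zero.mpr hm
  push_cast
  field_simp
  linarith [h]

include hirr in
lemma badly (hquad : ∃ A B C : ℤ, A ≠ 0 ∧ (A : ℝ) * α ^ 2 + B * α + C = 0) :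
    ∃ c : ℝ, 0 < c ∧ c ≤ 1 ∧ ∀ k : ℕ, 1 ≤ k → ∀ p : ℤ, c / k ≤ |(k:ℝ) * α - p| := by
  obtain ⟨A, B, C, hA, hrel⟩ := hquad
  have hA' : ((A:ℝ)) ≠ 0 := Int.cast_ne_zero.mpr hA
  set α' : ℝ := -(B:ℝ)/A - α with hα'
  set K : ℝ := 1 + |α - α'| with hK
  have hK1 : 1 ≤ K := le_add_of_nonneg_right (abs_nonneg _)
  have hAabs : (1:ℝ) ≤ |(A:ℝ)| := by
    have : (1:ℤ) ≤ |A| := Int.one_le_abs hA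
    calc (1:ℝ) ≤ ((|A| : ℤ) : ℝ) := by exact_mod_cast this
    _ = |(A:ℝ)| := by push_cast; ring
  refine ⟨1/(|(A:ℝ)| * K), by positivity, ?_, ?_⟩
  · rw [div_le_one (by positivity)]
    nlinarith
  intro k hk p
  have hkR : (1:ℝ) ≤ (k:ℝ) := by exact_mod_cast hk
  have hAα : (A:ℝ)*α' + B + A*α = 0 := by
    rw [hα']; field_simp; ring
  have hident : (A:ℝ) * ((p:ℝ) - k*α) * ((p:ℝ) - k*α') =
      (A:ℝ)*(p:ℝ)^2 + (B:ℝ)*(p:ℝ)*(k:ℝ) + (C:ℝ)*(k:ℝ)^2 := by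
    linear_combination (-(k:ℝ)*((p:ℝ) - k*α)) * hAα + (-(k:ℝ)^2) * hrel
  have hnz : (A*p^2 + B*p*(k:ℤ) + C*(k:ℤ)^2 : ℤ) ≠ 0 := by
    intro h0
    have h0' : (A:ℝ)*(p:ℝ)^2 + (B:ℝ)*(p:ℝ)*(k:ℝ) + (C:ℝ)*(k:ℝ)^2 = 0 := by
      exact_mod_cast congrArg (fun z : ℤ => (z : ℝ)) h0
    rw [← hident] at h0'
    rcases mul_eq_zero.mp h0' with h1 | h2
    · rcases mul_eq_zero.mp h1 with h1 | h1
      · exact hA' h1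
      · exact not_int_mul' hirr k (by exact_mod_cast Nat.one_le_iff_ne_zero.mp hk) p
          (by push_cast; linarith)
    · -- α' = p / k, so α rational
      apply hirr
      refine ⟨-(B:ℚ)/A - (p:ℚ)/k, ?_⟩
      have hk0 : ((k:ℝ)) ≠ 0 := by positivity
      have : α' = (p:ℝ)/k := by field_simp at h2 ⊢; linarith
      push_cast
      rw [hα'] at this
      have hkq : ((k:ℚ):ℝ) ≠ 0 := by push_cast; positivity
      field_simp at this ⊢
      linarith
  have hge1 : (1:ℝ) ≤ |(A:ℝ)| * (|(p:ℝ) - k*α| * |(p:ℝ) - k*α'|) := by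
    have : (1:ℤ) ≤ |A*p^2 + B*p*(k:ℤ) + C*(k:ℤ)^2| := Int.one_le_abs hnz
    have h2 : (1:ℝ) ≤ |(A:ℝ)*(p:ℝ)^2 + (B:ℝ)*(p:ℝ)*(k:ℝ) + (C:ℝ)*(k:ℝ)^2| := by
      calc (1:ℝ) ≤ ((|A*p^2 + B*p*(k:ℤ) + C*(k:ℤ)^2| : ℤ) : ℝ) := by exact_mod_cast this
      _ = _ := by push_cast; ring_nf
    rw [← hident] at h2
    rw [abs_mul, abs_mul] at h2
    linarith [h2]
  rw [abs_sub_comm]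
  by_cases hcase : 1 ≤ |(p:ℝ) - k*α|
  · calc 1/(|(A:ℝ)| * K) / k ≤ 1 := by
          rw [div_le_one (by positivity)]
          calc 1/(|(A:ℝ)| * K) ≤ 1 := by rw [div_le_one (by positivity)]; nlinarith
          _ ≤ (k:ℝ) := hkR
    _ ≤ _ := hcase
  · push_neg at hcase
    have hbound : |(p:ℝ) - k*α'| ≤ (k:ℝ) * K := by
      calc |(p:ℝ) - k*α'| = |((p:ℝ) - k*α) + (k*α - k*α')| := by ring_nf
      _ ≤ |(p:ℝ) - k*α| + |k*α - k*α'| := abs_add_le _ _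
      _ ≤ 1 + (k:ℝ) * |α - α'| := by
          have h5 : |(k:ℝ)*α - (k:ℝ)*α'| = (k:ℝ)*|α - α'| := by
            rw [← mul_sub, abs_mul, abs_of_nonneg (by positivity : (0:ℝ) ≤ (k:ℝ))]
          rw [h5]; linarith
      _ ≤ (k:ℝ) * K := by rw [hK]; nlinarith [abs_nonneg (α - α')]
    have hpos : 0 < |(p:ℝ) - k*α| := by
      rcases eq_or_lt_of_le (abs_nonneg ((p:ℝ) - k*α)) with h | h
      · exfalso
        have : (p:ℝ) - k*α = 0 := by
          have := abs_eq_zero.mp h.symm; exact this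
        exact not_int_mul' hirr k (by exact_mod_cast Nat.one_le_iff_ne_zero.mp hk) p
          (by push_cast; linarith)
      · exact h
    have step : (1:ℝ) ≤ |(A:ℝ)| * (|(p:ℝ) - k*α| * ((k:ℝ) * K)) := by
      calc (1:ℝ) ≤ |(A:ℝ)| * (|(p:ℝ) - k*α| * |(p:ℝ) - k*α'|) := hge1
      _ ≤ _ := by
          apply mul_le_mul_of_nonneg_left _ (abs_nonneg _)
          exact mul_le_mul_of_nonneg_left hbound (abs_nonneg _)
    rw [div_le_iff₀ (by positivity : (0:ℝ) < (k:ℝ))]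
    rw [div_le_iff₀ (by positivity : (0:ℝ) < |(A:ℝ)| * K)]
    nlinarith [step, abs_nonneg ((p:ℝ) - k*α)]
  
end bad


section core
variable {α : ℝ} (hirr : Irrational α)

include hirr in
lemma diff_cases {j k : ℕ} (hjk : j < k) :
    ff α k - ff α j = ff α (k - j) ∨ ff α k - ff α j = ff α (k - j) - 1 := by
  obtain ⟨z, hz⟩ := ff_add_int (α := α) j (k - j)
  rw [show j + (k - j) = k from by omega] at hz
  have b1 := ff_nonneg (α := α) k; have b2 := ff_lt_one (α := α) k
  have b3 := ff_nonneg (α := α) j; have b4 := ff_lt_one (α := α) j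
  have b5 := ff_nonneg (α := α) (k-j); have b6 := ff_lt_one (α := α) (k-j)
  have hz01 : z = 0 ∨ z = -1 := by
    have e1 : (-2:ℝ) < z := by linarith
    have e2 : (z:ℝ) < 1 := by linarith
    have e1' : (-2:ℤ) < z := by exact_mod_cast e1
    have e2' : (z:ℤ) < 1 := by exact_mod_cast e2
    omega
  rcases hz01 with h | h
  · left; rw [h] at hz; push_cast at hz; linarith
  · right; rw [h] at hz; push_cast at hz; linarith

include hirr in
lemma no_sum_one {a b : ℕ} (ha : 1 ≤ a + b) (h : ff α a + ff α b = 1) : False := by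
  have h1 := ff_add_of_ge (α := α) (j := a) (k := b) (le_of_eq h.symm)
  have h0 : ff α (a + b) = 0 := by rw [h1, h]; ring
  exact absurd h0 (ne_of_gt (ff_pos hirr ha))

include hirr in
lemma gapA_mem {n r : ℕ} (hr1 : 1 ≤ r) (hrn : r < n)
    (hrmin : ∀ j, 1 ≤ j → j < n → ff α r ≤ ff α j) : ff α r ∈ gaps α n := by
  have h0 : (0:ℝ) ∈ cfPoints α n := by
    rw [← ff_zero (α := α)]; exact ff_mem_cfPoints (by omega)
  have hr : ff α r ∈ cfPoints α n := ff_mem_cfPoints hrn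
  have hcons : ∀ z ∈ cfPoints α n, z ≤ 0 ∨ ff α r ≤ z := by
    intro z hz
    rcases mem_cfPoints_iff.mp hz with rfl | ⟨k, hk, rfl⟩
    · exact Or.inr (ff_lt_one (α := α) r).le
    · rcases Nat.eq_zero_or_pos k with rfl | hk1
      · left; rw [ff_zero]
      · exact Or.inr (hrmin k hk1 hk)
  have := gap_mem h0 hr (ff_pos hirr hr1) hcons
  simpa using this

lemma gapB_mem {n s : ℕ} (hsn : s < n)
    (hsmax : ∀ j, 1 ≤ j → j < n → ff α j ≤ ff α s) : 1 - ff α s ∈ gaps α n := by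
  apply gap_mem (ff_mem_cfPoints hsn) one_mem_cfPoints (ff_lt_one (α := α) s)
  intro z hz
  rcases mem_cfPoints_iff.mp hz with rfl | ⟨k, hk, rfl⟩
  · exact Or.inr le_rfl
  · rcases Nat.eq_zero_or_pos k with rfl | hk1
    · left; rw [ff_zero]; exact ff_nonneg (α := α) s
    · exact Or.inl (hsmax k hk1 hk)

include hirr in
lemma two_gap_struct {n : ℕ} (hn : 2 ≤ n) (h2 : (gaps α n).ncard = 2) :
    ∃ r s : ℕ, (1 ≤ r ∧ r < n) ∧ (1 ≤ s ∧ s < n) ∧ r + s = n ∧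
      (∀ j, 1 ≤ j → j < n → ff α r ≤ ff α j) ∧
      (∀ j, 1 ≤ j → j < n → ff α j ≤ ff α s) := by
  have hne : (Finset.Ico 1 n).Nonempty := ⟨1, by simp [Finset.mem_Ico]; omega⟩
  obtain ⟨r, hrmem, hrmin⟩ := Finset.exists_min_image (Finset.Ico 1 n) (ff α) hne
  obtain ⟨s, hsmem, hsmax⟩ := Finset.exists_max_image (Finset.Ico 1 n) (ff α) hne
  simp only [Finset.mem_Ico] at hrmem hsmem
  have hrmin' : ∀ j, 1 ≤ j → j < n → ff α r ≤ ff α j := fun j hj1 hj2 =>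
    hrmin j (by simp [Finset.mem_Ico]; omega)
  have hsmax' : ∀ j, 1 ≤ j → j < n → ff α j ≤ ff α s := fun j hj1 hj2 =>
    hsmax j (by simp [Finset.mem_Ico]; omega)
  refine ⟨r, s, hrmem, hsmem, ?_, hrmin', hsmax'⟩
  have hge : n ≤ r + s := by
    by_contra hlt; push_neg at hlt
    have hrs1 : 1 ≤ r + s := by omega
    rcases lt_or_ge (ff α r + ff α s) 1 with hcase | hcase
    · have he := ff_add_of_lt (α := α) hcase
      have h1 : ff α (r+s) ≤ ff α s := hsmax' _ hrs1 hlt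
      have hp : 0 < ff α r := ff_pos hirr hrmem.1
      linarith
    · have he := ff_add_of_ge (α := α) hcase
      have h1 : ff α r ≤ ff α (r+s) := hrmin' _ hrs1 hlt
      have hp : ff α s < 1 := ff_lt_one (α := α) s
      linarith
  rcases eq_or_lt_of_le hge with heq | hgt
  · omega
  exfalso
  set k0 := n - r with hk0def
  have hk01 : 1 ≤ k0 := by omega
  have hk0n : k0 < n := by omega
  have hk0s : k0 < s := by omega
  obtain ⟨y, hy, hxy, hcons⟩ := exists_next (α := α) (n := n) (ff_lt_one (α := α) k0)
  have hgmem : y - ff α k0 ∈ gaps α n := gap_mem (ff_mem_cfPoints hk0n) hy hxy hcons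
  have hamem : ff α r ∈ gaps α n := gapA_mem hirr hrmem.1 hrmem.2 hrmin'
  have hbmem : 1 - ff α s ∈ gaps α n := gapB_mem hsmem.2 hsmax'
  have hab : ff α r ≠ 1 - ff α s := fun h =>
    no_sum_one hirr (a := r) (b := s) (by omega) (by linarith)
  have hga : y - ff α k0 ≠ ff α r ∧ y - ff α k0 ≠ 1 - ff α s := by
    rcases mem_cfPoints_iff.mp hy with rfl | ⟨j, hj, rfl⟩
    · constructor
      · intro h
        exact no_sum_one hirr (a := k0) (b := r) (by omega) (by linarith)
      · intro h
        have hks : ff α k0 = ff α s := by linarith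
        have := ff_inj hirr hks; omega
    · have hjk0 : j ≠ k0 := fun h => by rw [h] at hxy; exact lt_irrefl _ hxy
      rcases lt_or_gt_of_ne hjk0 with hlt2 | hgt2
      · have hd := diff_cases hirr (j := j) (k := k0) hlt2
        have hd1 : ff α j - ff α k0 = 1 - ff α (k0 - j) := by
          rcases hd with h | h
          · exfalso; have := ff_nonneg (α := α) (k0 - j); linarith
          · linarith
        constructor
        · intro h; rw [hd1] at h
          exact no_sum_one hirr (a := k0 - j) (b := r) (by omega) (by linarith)
        · intro h; rw [hd1] at h
          have hks : ff α (k0 - j) = ff α s := by linarith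
          have := ff_inj hirr hks; omega
      · have hd := diff_cases hirr (j := k0) (k := j) hgt2
        have hd1 : ff α j - ff α k0 = ff α (j - k0) := by
          rcases hd with h | h
          · exact h
          · exfalso; have := ff_lt_one (α := α) (j - k0); linarith
        have hjr : j - k0 < r := by omega
        constructor
        · intro h; rw [hd1] at h
          have := ff_inj hirr h; omega
        · intro h; rw [hd1] at h
          exact no_sum_one hirr (a := j - k0) (b := s) (by omega) (by linarith)
  have hsub : ({ff α r, 1 - ff α s, y - ff α k0} : Set ℝ) ⊆ gaps α n := by
    intro u hu
    rcases hu with rfl | rfl | rfl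
    · exact hamem
    · exact hbmem
    · exact hgmem
  have h3 : ({ff α r, 1 - ff α s, y - ff α k0} : Set ℝ).ncard = 3 := by
    rw [Set.ncard_eq_three]
    exact ⟨_, _, _, hab, Ne.symm hga.1, Ne.symm hga.2, rfl⟩
  have hle := Set.ncard_le_ncard hsub gaps_finite
  omega

end core

lemma pigeon (t : Finset ℕ) (x : ℕ → ℝ) (δ : ℝ) (hδ : 0 < δ)
    (h01 : ∀ k ∈ t, 0 ≤ x k ∧ x k < 1)
    (hsep : ∀ j ∈ t, ∀ k ∈ t, j ≠ k → δ ≤ |x k - x j|) :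
    (t.card : ℝ) ≤ 1/δ + 1 := by
  have hcard : t.card ≤ (Finset.Icc (0:ℤ) ⌊1/δ⌋).card := by
    apply Finset.card_le_card_of_injOn (fun k => ⌊x k / δ⌋)
    · intro a ha
      simp only [Finset.mem_coe, Finset.mem_Icc]
      refine ⟨Int.floor_nonneg.mpr (div_nonneg (h01 a ha).1 hδ.le), ?_⟩
      apply Int.floor_le_floor
      gcongr
      exact (h01 a ha).2.le
    · intro a ha b hb hfl
      by_contra hne
      have ha' := Int.floor_le (x a / δ)
      have hb' := Int.floor_le (x b / δ)
      have ha'' := Int.lt_floor_add_one (x a / δ)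
      have hb'' := Int.lt_floor_add_one (x b / δ)
      simp only at hfl
      rw [hfl] at ha' ha''
      have h1 : |x b / δ - x a / δ| < 1 := by
        rw [abs_lt]; constructor <;> linarith
      have h2 : |x b - x a| < δ := by
        rw [← sub_div, abs_div, abs_of_pos hδ, div_lt_one hδ] at h1
        exact h1
      exact absurd (hsep a ha b hb hne) (by linarith)
  have hI : ((Finset.Icc (0:ℤ) ⌊1/δ⌋).card : ℝ) ≤ 1/δ + 1 := by
    rw [Int.card_Icc]
    have h0 : 0 ≤ ⌊1/δ⌋ := Int.floor_nonneg.mpr (by positivity)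
    have h1 : ((⌊1/δ⌋ + 1 - 0 : ℤ).toNat : ℤ) = ⌊1/δ⌋ + 1 := by rw [Int.toNat_of_nonneg (by omega : (0:ℤ) ≤ ⌊1/δ⌋ + 1 - 0)]; ring
    have he : ((⌊1/δ⌋ + 1 - 0 : ℤ).toNat : ℝ) = (⌊1/δ⌋:ℝ) + 1 := by exact_mod_cast h1
    rw [he]
    have := Int.floor_le (1/δ)
    linarith
  calc (t.card:ℝ) ≤ ((Finset.Icc (0:ℤ) ⌊1/δ⌋).card : ℝ) := by exact_mod_cast hcard
  _ ≤ 1/δ + 1 := hI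

section lower
variable {α : ℝ} (hirr : Irrational α)

include hirr in
lemma rs_lower {c : ℝ} (hc : 0 < c) (hc1 : c ≤ 1)
    (hbad : ∀ k : ℕ, 1 ≤ k → ∀ p : ℤ, c / k ≤ |(k:ℝ) * α - p|)
    {n r s : ℕ} (hr : 1 ≤ r ∧ r < n) (hs : 1 ≤ s ∧ s < n) (hrs : r + s = n)
    (hrmin : ∀ j, 1 ≤ j → j < n → ff α r ≤ ff α j)
    (hsmax : ∀ j, 1 ≤ j → j < n → ff α j ≤ ff α s) :
    c * n / 3 ≤ (r:ℝ) ∧ c * n / 3 ≤ (s:ℝ) := by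
  have hrpos : (0:ℝ) < r := by exact_mod_cast hr.1
  have hspos : (0:ℝ) < s := by exact_mod_cast hs.1
  have hl1pos : 0 < ff α r := ff_pos hirr hr.1
  have hl2pos : 0 < 1 - ff α s := by linarith [ff_lt_one (α := α) s]
  -- lower bounds from badly approximability
  have hl1 : c / r ≤ ff α r := by
    have := hbad r hr.1 ⌊(r:ℝ)*α⌋
    rwa [abs_of_nonneg (by exact Int.fract_nonneg _)] at this
  have hl2 : c / s ≤ 1 - ff α s := by
    have := hbad s hs.1 (⌊(s:ℝ)*α⌋ + 1)
    have he : |(s:ℝ)*α - (⌊(s:ℝ)*α⌋ + 1 : ℤ)| = 1 - ff α s := by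
      have h1 : (s:ℝ)*α - (⌊(s:ℝ)*α⌋ + 1 : ℤ) = ff α s - 1 := by
        unfold ff Int.fract; push_cast; ring
      rw [h1, abs_of_nonpos (by linarith [ff_lt_one (α := α) s])]; ring
    rwa [he] at this
  -- sub-a : d < s → ff α r ≤ 1 - ff α d
  have suba : ∀ d, 1 ≤ d → d < s → ff α r ≤ 1 - ff α d := by
    intro d hd1 hds
    by_contra hcon; push_neg at hcon
    have hsum : 1 ≤ ff α d + ff α r := by linarith
    have he := ff_add_of_ge (α := α) hsum
    have hdr : d + r < n := by omega
    have := hrmin (d + r) (by omega) hdr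
    have := ff_lt_one (α := α) d
    linarith
  -- sub-b : m < r → 1 - ff α s ≤ ff α m
  have subb : ∀ m, 1 ≤ m → m < r → 1 - ff α s ≤ ff α m := by
    intro m hm1 hmr
    by_contra hcon; push_neg at hcon
    have hsum : ff α m + ff α s < 1 := by linarith
    have he := ff_add_of_lt (α := α) hsum
    have hms : m + s < n := by omega
    have h1 := hsmax (m + s) (by omega) hms
    have h2 := ff_pos hirr hm1
    linarith
  -- separation for range s
  have sep1 : ∀ j ∈ Finset.range s, ∀ k ∈ Finset.range s, j ≠ k → ff α r ≤ |ff α k - ff α j| := by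
    have key : ∀ j k, j < k → k < s → ff α r ≤ |ff α k - ff α j| := by
      intro j k hjk hks
      rcases diff_cases hirr hjk with h | h
      · rw [h, abs_of_nonneg (ff_nonneg (α := α) _)] at *
        exact hrmin (k - j) (by omega) (by omega)
      · have : |ff α k - ff α j| = 1 - ff α (k - j) := by
          rw [h, abs_of_nonpos (by linarith [ff_lt_one (α := α) (k-j)])]; ring
        rw [this]
        exact suba (k - j) (by omega) (by omega)
    intro j hj k hk hne
    simp only [Finset.mem_range] at hj hk
    rcases lt_or_gt_of_ne hne with h | h
    · exact key j k h hk
    · rw [abs_sub_comm]; exact key k j h hj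
  have sep2 : ∀ j ∈ Finset.Ico s n, ∀ k ∈ Finset.Ico s n, j ≠ k →
      (1 - ff α s) ≤ |ff α k - ff α j| := by
    have key : ∀ j k, s ≤ j → j < k → k < n → (1 - ff α s) ≤ |ff α k - ff α j| := by
      intro j k hsj hjk hkn
      rcases diff_cases hirr hjk with h | h
      · rw [h, abs_of_nonneg (ff_nonneg (α := α) _)]
        exact subb (k - j) (by omega) (by omega)
      · have he : |ff α k - ff α j| = 1 - ff α (k - j) := by
          rw [h, abs_of_nonpos (by linarith [ff_lt_one (α := α) (k-j)])]; ring
        rw [he]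
        have := hsmax (k - j) (by omega) (by omega)
        linarith
    intro j hj k hk hne
    simp only [Finset.mem_Ico] at hj hk
    rcases lt_or_gt_of_ne hne with h | h
    · exact key j k hj.1 h hk.2
    · rw [abs_sub_comm]; exact key k j hk.1 h hj.2
  have hb1 : (s:ℝ) ≤ 1/(ff α r) + 1 := by
    have := pigeon (Finset.range s) (ff α) (ff α r) hl1pos
      (fun k _ => ⟨ff_nonneg (α := α) k, ff_lt_one (α := α) k⟩) sep1
    simpa using this
  have hb2 : (r:ℝ) ≤ 1/(1 - ff α s) + 1 := by
    have := pigeon (Finset.Ico s n) (ff α) (1 - ff α s) hl2pos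
      (fun k _ => ⟨ff_nonneg (α := α) k, ff_lt_one (α := α) k⟩) sep2
    have hcard : (Finset.Ico s n).card = r := by
      rw [Nat.card_Ico]; omega
    rwa [hcard] at this
  -- conclude
  have hinv1 : 1/(ff α r) ≤ (r:ℝ)/c := by
    rw [div_le_div_iff₀ hl1pos hc]
    have : c / r * r ≤ ff α r * r := by
      apply mul_le_mul_of_nonneg_right hl1 hrpos.le
    rw [div_mul_cancel₀] at this
    · linarith
    · exact hrpos.ne'
  have hinv2 : 1/(1 - ff α s) ≤ (s:ℝ)/c := by
    rw [div_le_div_iff₀ hl2pos hc]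
    have : c / s * s ≤ (1 - ff α s) * s := by
      apply mul_le_mul_of_nonneg_right hl2 hspos.le
    rw [div_mul_cancel₀] at this
    · linarith
    · exact hspos.ne'
  have hr1R : (1:ℝ) ≤ (r:ℝ) := by exact_mod_cast hr.1
  have hs1R : (1:ℝ) ≤ (s:ℝ) := by exact_mod_cast hs.1
  have hrc : (1:ℝ) ≤ (r:ℝ)/c := by
    rw [le_div_iff₀ hc]; linarith
  have hsc : (1:ℝ) ≤ (s:ℝ)/c := by
    rw [le_div_iff₀ hc]; linarith
  have hnrs : (n:ℝ) = (r:ℝ) + (s:ℝ) := by exact_mod_cast congrArg (Nat.cast : ℕ → ℝ) hrs.symm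
  constructor
  · have hmain : (n:ℝ) ≤ 3 * ((r:ℝ)/c) := by
      have hs3 : (s:ℝ) ≤ 2*((r:ℝ)/c) := by linarith
      have hr3 : (r:ℝ) ≤ (r:ℝ)/c := by
        rw [le_div_iff₀ hc]; nlinarith
      linarith
    have h := mul_le_mul_of_nonneg_left hmain hc.le
    have he : c * (3 * ((r:ℝ)/c)) = 3 * r := by field_simp
    linarith
  · have hmain : (n:ℝ) ≤ 3 * ((s:ℝ)/c) := by
      have hr3 : (r:ℝ) ≤ 2*((s:ℝ)/c) := by linarith
      have hs3 : (s:ℝ) ≤ (s:ℝ)/c := by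
        rw [le_div_iff₀ hc]; nlinarith
      linarith
    have h := mul_le_mul_of_nonneg_left hmain hc.le
    have he : c * (3 * ((s:ℝ)/c)) = 3 * s := by field_simp
    linarith

end lower

section final
variable {α : ℝ} (hirr : Irrational α)

include hirr in
lemma growth {c : ℝ} (hc : 0 < c) (hc1 : c ≤ 1)
    (hbad : ∀ k : ℕ, 1 ≤ k → ∀ p : ℤ, c / k ≤ |(k:ℝ) * α - p|)
    {n n' : ℕ} (hn : 2 ≤ n) (hn' : 2 ≤ n') (hlt : n < n')
    (h2 : (gaps α n).ncard = 2) (h2' : (gaps α n').ncard = 2) :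
    (1 + c/3) * n ≤ (n' : ℝ) := by
  obtain ⟨r, s, hr, hs, hrs, hrmin, hsmax⟩ := two_gap_struct hirr hn h2
  obtain ⟨r', s', hr', hs', hrs', hrmin', hsmax'⟩ := two_gap_struct hirr hn' h2'
  have hr'cases : r' = r ∨ n ≤ r' := by
    by_contra hcon; push_neg at hcon
    have h1 : ff α r ≤ ff α r' := hrmin r' hr'.1 hcon.2
    have h2r : ff α r' ≤ ff α r := hrmin' r hr.1 (by omega)
    exact hcon.1 (ff_inj hirr (le_antisymm h2r h1))
  have hs'cases : s' = s ∨ n ≤ s' := by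
    by_contra hcon; push_neg at hcon
    have h1 : ff α s' ≤ ff α s := hsmax s' hs'.1 hcon.2
    have h2s : ff α s ≤ ff α s' := hsmax' s hs.1 (by omega)
    exact hcon.1 (ff_inj hirr (le_antisymm (le_antisymm h1 h2s).le (le_antisymm h1 h2s).ge))
  have hmin : n + s ≤ n' ∨ n + r ≤ n' := by
    rcases hr'cases with h | h
    · rcases hs'cases with h2c | h2c
      · omega
      · right; omega
    · left
      rcases hs'cases with h2c | h2c <;> omega
  obtain ⟨hr3, hs3⟩ := rs_lower hirr hc hc1 hbad hr hs hrs hrmin hsmax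
  rcases hmin with h | h
  · have hcast : (n:ℝ) + (s:ℝ) ≤ (n':ℝ) := by exact_mod_cast h
    nlinarith
  · have hcast : (n:ℝ) + (r:ℝ) ≤ (n':ℝ) := by exact_mod_cast h
    nlinarith

lemma gaps_one : gaps α 1 = {1} := by
  have hpts : cfPoints α 1 = {1, 0} := by
    ext z
    rw [mem_cfPoints_iff]
    constructor
    · rintro (rfl | ⟨k, hk, rfl⟩)
      · simp
      · interval_cases k
        simp [ff_zero]
    · rintro (rfl | rfl)
      · exact Or.inl rfl
      · exact Or.inr ⟨0, by omega, ff_zero⟩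
  ext d
  constructor
  · rintro ⟨x, hx, y, hy, hxy, _, rfl⟩
    rw [hpts] at hx hy
    rcases hx with rfl | rfl <;> rcases hy with rfl | rfl <;>
      first
        | (exfalso; exact lt_irrefl _ hxy)
        | (exfalso; linarith)
        | (simp)
  · rintro rfl
    refine ⟨0, by rw [hpts]; right; rfl, 1, by rw [hpts]; left; rfl, by norm_num, ?_, by ring⟩
    intro z hz
    rw [hpts] at hz
    rcases hz with rfl | rfl
    · right; exact le_rfl
    · left; exact le_rfl

include hirr in
lemma two_gap_ge_two {n : ℕ} (h2 : (gaps α n).ncard = 2) : 2 ≤ n := by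
  by_contra hcon; push_neg at hcon
  interval_cases n
  · have : gaps α 0 = ∅ := by
      ext d
      simp only [Set.mem_empty_iff_false, iff_false]
      rintro ⟨x, hx, y, hy, hxy, _, rfl⟩
      rcases mem_cfPoints_iff.mp hx with rfl | ⟨k, hk, rfl⟩
      · rcases mem_cfPoints_iff.mp hy with rfl | ⟨k, hk, rfl⟩
        · exact lt_irrefl _ hxy
        · omega
      · omega
    rw [this] at h2
    simp at h2
  · rw [gaps_one] at h2
    simp at h2

include hirr in
lemma card_filter_bound {c : ℝ} (hc : 0 < c) (hc1 : c ≤ 1)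
    (hbad : ∀ k : ℕ, 1 ≤ k → ∀ p : ℤ, c / k ≤ |(k:ℝ) * α - p|) (N : ℕ) :
    ((((Finset.Icc 1 N).filter (fun n => (gaps α n).ncard = 2)).card : ℝ)) ≤
      Real.log N / Real.log (1 + c/3) + 1 := by
  set q : ℝ := 1 + c/3 with hq
  have hq1 : 1 < q := by rw [hq]; linarith
  have hlq : 0 < Real.log q := Real.log_pos hq1
  set T := (Finset.Icc 1 N).filter (fun n => (gaps α n).ncard = 2) with hT
  have hmemT : ∀ n ∈ T, 2 ≤ n ∧ n ≤ N ∧ (gaps α n).ncard = 2 := by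
    intro n hn
    rw [hT, Finset.mem_filter, Finset.mem_Icc] at hn
    exact ⟨two_gap_ge_two hirr hn.2, hn.1.2, hn.2⟩
  set M : ℤ := ⌊Real.log N / Real.log q⌋ with hM
  have hM0 : 0 ≤ M := by
    apply Int.floor_nonneg.mpr
    apply div_nonneg _ hlq.le
    rcases Nat.eq_zero_or_pos N with rfl | hN
    · simp
    · exact Real.log_natCast_nonneg N
  have hmono : ∀ n ∈ T, ∀ n' ∈ T, n < n' →
      ⌊Real.log n / Real.log q⌋ < ⌊Real.log n' / Real.log q⌋ := by
    intro n hn n' hn' hlt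
    obtain ⟨hn2, hnN, hng⟩ := hmemT n hn
    obtain ⟨hn2', hnN', hng'⟩ := hmemT n' hn'
    have hgr := growth hirr hc hc1 hbad hn2 hn2' hlt hng hng'
    have hnpos : (0:ℝ) < n := by exact_mod_cast (by omega : 0 < n)
    have hqn : 0 < q * n := by positivity
    have hlog : Real.log q + Real.log n ≤ Real.log n' := by
      rw [← Real.log_mul (by positivity) hnpos.ne']
      apply Real.log_le_log hqn
      exact_mod_cast hgr
    have hdiv : Real.log n / Real.log q + 1 ≤ Real.log n' / Real.log q := by
      rw [div_add' _ _ _ hlq.ne', div_le_div_iff₀ hlq hlq]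
      nlinarith
    calc ⌊Real.log n / Real.log q⌋ < ⌊Real.log n / Real.log q⌋ + 1 := by omega
    _ = ⌊Real.log n / Real.log q + 1⌋ := by rw [Int.floor_add_one]
    _ ≤ ⌊Real.log n' / Real.log q⌋ := Int.floor_le_floor hdiv
  have hcard : T.card ≤ (Finset.Icc (0:ℤ) M).card := by
    refine Finset.card_le_card_of_injOn (fun n : ℕ => ⌊Real.log n / Real.log q⌋) ?_ ?_
    · intro n hn
      obtain ⟨hn2, hnN, _⟩ := hmemT n hn
      simp only [Finset.mem_coe, Finset.mem_Icc]
      constructor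
      · apply Int.floor_nonneg.mpr
        apply div_nonneg (Real.log_natCast_nonneg n) hlq.le
      · rw [hM]
        apply Int.floor_le_floor
        have hlog2 : Real.log n ≤ Real.log N := by
          apply Real.log_le_log (by exact_mod_cast (show 0 < n by omega))
          exact_mod_cast hnN
        gcongr
    · intro a ha b hb hab
      by_contra hne
      rcases lt_or_gt_of_ne hne with h | h
      · exact absurd hab (ne_of_lt (hmono a ha b hb h))
      · exact absurd hab.symm (ne_of_lt (hmono b hb a ha h))
  have hIcc : ((Finset.Icc (0:ℤ) M).card : ℝ) ≤ Real.log N / Real.log q + 1 := by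
    rw [Int.card_Icc]
    have h1 : ((M + 1 - 0 : ℤ).toNat : ℤ) = M + 1 := by
      rw [Int.toNat_of_nonneg (by omega : (0:ℤ) ≤ M + 1 - 0)]; ring
    have h2 : ((M + 1 - 0 : ℤ).toNat : ℝ) = (M:ℝ) + 1 := by exact_mod_cast h1
    rw [h2]
    have := Int.floor_le (Real.log N / Real.log q)
    rw [hM] at *
    linarith
  calc (T.card : ℝ) ≤ ((Finset.Icc (0:ℤ) M).card : ℝ) := by exact_mod_cast hcard
  _ ≤ Real.log N / Real.log q + 1 := hIcc

end final

/-- For a quadratic irrational `α ∈ (0,1)`, the density of `n` for which the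
partition of `[0,1]` by `{0}, {α}, …, {(n-1)α}, 1` has exactly two distinct
gap lengths is zero. -/
theorem quadratic_irrational_two_gap_density_zero (α : ℝ) (hirr : Irrational α)
    (h0 : 0 < α) (h1 : α < 1)
    (hquad : ∃ A B C : ℤ, A ≠ 0 ∧ (A : ℝ) * α ^ 2 + B * α + C = 0) :
    Tendsto (fun N : ℕ =>
        (((Finset.Icc 1 N).filter (fun n => (gaps α n).ncard = 2)).card : ℝ) / N)
      atTop (nhds 0) := by
  obtain ⟨c, hc, hc1, hbad⟩ := badly hirr hquad
  set q : ℝ := 1 + c/3 with hq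
  have hlq : 0 < Real.log q := Real.log_pos (by rw [hq]; linarith)
  apply squeeze_zero (g := fun N : ℕ => (Real.log N / Real.log q + 1) / N)
  · intro N; positivity
  · intro N
    rcases Nat.eq_zero_or_pos N with rfl | hN
    · simp
    · have hNR : (0:ℝ) < N := by exact_mod_cast hN
      gcongr
      exact card_filter_bound hirr hc hc1 hbad N
  · have h1' : Filter.Tendsto (fun x : ℝ => Real.log x / x) atTop (nhds 0) :=
      Real.isLittleO_log_id_atTop.tendsto_div_nhds_zero
    have h2' : Filter.Tendsto (fun N : ℕ => Real.log N / N) atTop (nhds 0) :=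
      h1'.comp tendsto_natCast_atTop_atTop
    have h3' : Filter.Tendsto (fun N : ℕ => (1/Real.log q) * (Real.log N / N) + 1/N)
        atTop (nhds 0) := by
      have := (h2'.const_mul (1/Real.log q)).add tendsto_one_div_atTop_nhds_zero_nat
      simpa using this
    apply h3'.congr
    intro N
    rcases Nat.eq_zero_or_pos N with rfl | hN
    · simp
    · have hNR : ((N:ℝ)) ≠ 0 := by
        have : (0:ℝ) < N := by exact_mod_cast hN
        linarith
      field_simp
end

section
/- Let α be a positive irrational real number. The continued fraction expansion of α is eventually periodic if and only if α is a root of a quadratic polynomial with integer coefficients. -/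
namespace LagrangeAux


/-- Irrational element of (0,1). -/
def Ir (y : ℝ) : Prop := Irrational y ∧ 0 < y ∧ y < 1

theorem ir_fract {y : ℝ} (h : Irrational y) : Ir (Int.fract y) :=
  ⟨by rw [← Int.self_sub_floor]; exact h.sub_intCast _,
   Int.fract_pos.mpr (h.ne_int _), Int.fract_lt_one y⟩

theorem Ir.inv_gt {y : ℝ} (h : Ir y) : 1 < y⁻¹ := one_lt_inv₀ h.2.1 |>.mpr h.2.2

theorem Ir.gauss {y : ℝ} (h : Ir y) : Ir (gaussMap y) := ir_fract h.1.inv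

theorem Ir.iter {y : ℝ} (h : Ir y) (n : ℕ) : Ir (gaussMap^[n] y) := by
  induction n with
  | zero => exact h
  | succ n ih => rw [Function.iterate_succ_apply']; exact ih.gauss

theorem gauss_eq (y : ℝ) : gaussMap y = y⁻¹ - ⌊y⁻¹⌋ := rfl

theorem Ir.floor_one_le {y : ℝ} (h : Ir y) : 1 ≤ ⌊y⁻¹⌋ :=
  Int.le_floor.mpr (by exact_mod_cast h.inv_gt.le)

theorem Ir.key {y : ℝ} (h : Ir y) : y * (gaussMap y + ⌊y⁻¹⌋) = 1 := by
  rw [gauss_eq]; have := h.2.1.ne'; field_simp; ring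


theorem two_step {y z : ℝ} (hy : Ir y) (hz : Ir z)
    (h1 : ⌊y⁻¹⌋ = ⌊z⁻¹⌋) (h2 : ⌊(gaussMap y)⁻¹⌋ = ⌊(gaussMap z)⁻¹⌋) :
    |y - z| * 4 ≤ |gaussMap (gaussMap y) - gaussMap (gaussMap z)| := by
  set a : ℤ := ⌊y⁻¹⌋ with ha
  set b : ℤ := ⌊(gaussMap y)⁻¹⌋ with hb
  set y1 := gaussMap y; set z1 := gaussMap z
  set y2 := gaussMap y1; set z2 := gaussMap z1
  have e1 : y * (y1 + a) = 1 := hy.key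
  have e2 : y1 * (y2 + b) = 1 := hy.gauss.key
  have e3 : z * (z1 + a) = 1 := by rw [h1]; exact hz.key
  have e4 : z1 * (z2 + b) = 1 := by rw [h2]; exact hz.gauss.key
  have ha1 : (1:ℝ) ≤ a := by exact_mod_cast hy.floor_one_le
  have hb1 : (1:ℝ) ≤ b := by exact_mod_cast hy.gauss.floor_one_le
  have hy1 := hy.gauss; have hz1 := hz.gauss
  have hy2 := hy1.gauss; have hz2 := hz1.gauss
  have key : (y - z) * ((y1 + a) * (z1 + a) * ((y2 + b) * (z2 + b))) = y2 - z2 := by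
    have k1 : (y - z) * ((y1 + a) * (z1 + a)) = z1 - y1 := by
      linear_combination (z1 + a) * e1 - (y1 + a) * e3
    have k2 : (y1 - z1) * ((y2 + b) * (z2 + b)) = z2 - y2 := by
      linear_combination (z2 + b) * e2 - (y2 + b) * e4
    linear_combination ((y2+b)*(z2+b)) * k1 - k2
  have hp1 : (2:ℝ) ≤ (y1 + a) * (y2 + b) := by
    nlinarith [e2, mul_nonneg (by linarith : (0:ℝ) ≤ (a:ℝ) - 1) (by nlinarith [hy2.2.1] : (0:ℝ) ≤ y2 + b), hy2.2.1]
  have hp2 : (2:ℝ) ≤ (z1 + a) * (z2 + b) := by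
    nlinarith [e4, mul_nonneg (by linarith : (0:ℝ) ≤ (a:ℝ) - 1) (by nlinarith [hz2.2.1] : (0:ℝ) ≤ z2 + b), hz2.2.1]
  have hP : (4:ℝ) ≤ (y1 + a) * (z1 + a) * ((y2 + b) * (z2 + b)) := by
    have h4 : (2:ℝ) * 2 ≤ ((y1 + a) * (y2 + b)) * ((z1 + a) * (z2 + b)) :=
      mul_le_mul hp1 hp2 (by norm_num) (by linarith)
    have hrg : (y1 + (a:ℝ)) * (z1 + a) * ((y2 + b) * (z2 + b))
        = ((y1 + a) * (y2 + b)) * ((z1 + a) * (z2 + b)) := by ring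
    rw [hrg]; linarith
  calc |y - z| * 4 ≤ |y - z| * ((y1 + a) * (z1 + a) * ((y2 + b) * (z2 + b))) := by
        exact mul_le_mul_of_nonneg_left hP (abs_nonneg _)
    _ = |y2 - z2| := by
        rw [← key, abs_mul, abs_of_pos (by linarith : (0:ℝ) < (y1 + a) * (z1 + a) * ((y2 + b) * (z2 + b)))]

theorem close_of_same {y z : ℝ} (m : ℕ) (hy : Ir y) (hz : Ir z)
    (h : ∀ n, ⌊(gaussMap^[n] y)⁻¹⌋ = ⌊(gaussMap^[n] z)⁻¹⌋) :
    |y - z| ≤ (1/4) ^ m := by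
  induction m generalizing y z with
  | zero =>
      simp only [pow_zero]
      have hlt : |y - z| < 1 := abs_sub_lt_iff.mpr
        ⟨by linarith [hy.2.1, hy.2.2, hz.2.1, hz.2.2], by linarith [hy.2.1, hy.2.2, hz.2.1, hz.2.2]⟩
      linarith
  | succ m ih =>
      have h0 := h 0
      have h1' := h 1
      simp only [Function.iterate_zero_apply, Function.iterate_one] at h0 h1'
      have step := two_step hy hz h0 h1'
      have ihh := ih (hy.iter 2) (hz.iter 2) (fun n => by
        rw [← Function.iterate_add_apply, ← Function.iterate_add_apply]; exact h (n + 2))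
      have : gaussMap^[2] y = gaussMap (gaussMap y) := rfl
      rw [this] at ihh
      have : gaussMap^[2] z = gaussMap (gaussMap z) := rfl
      rw [this] at ihh
      rw [pow_succ]
      nlinarith [abs_nonneg (y - z)]

theorem eq_of_same {y z : ℝ} (hy : Ir y) (hz : Ir z)
    (h : ∀ n, ⌊(gaussMap^[n] y)⁻¹⌋ = ⌊(gaussMap^[n] z)⁻¹⌋) : y = z := by
  by_contra hne
  have hpos : 0 < |y - z| := abs_pos.mpr (sub_ne_zero.mpr hne)
  obtain ⟨m, hm⟩ := exists_pow_lt_of_lt_one hpos (by norm_num : (1/4 : ℝ) < 1)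
  linarith [close_of_same m hy hz h]


def Quad (x : ℝ) : Prop := ∃ A B C : ℤ, A ≠ 0 ∧ (A : ℝ) * x ^ 2 + B * x + C = 0

theorem lin_contra {x : ℝ} (hx : Irrational x) {B C : ℤ} (hB : B ≠ 0)
    (h : (B : ℝ) * x + C = 0) : False := by
  have hB' : (B : ℝ) ≠ 0 := Int.cast_ne_zero.mpr hB
  have hxeq : x = ((-C / B : ℚ) : ℝ) := by push_cast; field_simp; linarith
  exact Rat.not_irrational _ (hxeq ▸ hx)

theorem quad_upgrade {x : ℝ} (hx : Irrational x) {A B C : ℤ}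
    (hne : ¬(A = 0 ∧ B = 0 ∧ C = 0)) (h : (A : ℝ) * x ^ 2 + B * x + C = 0) : Quad x := by
  by_cases hA : A = 0
  · subst hA
    simp only [Int.cast_zero, zero_mul, zero_add] at h
    by_cases hB : B = 0
    · subst hB
      simp only [Int.cast_zero, zero_mul, zero_add] at h
      exact absurd ⟨rfl, rfl, by exact_mod_cast h⟩ hne
    · exact absurd (lin_contra hx hB h) not_false
  · exact ⟨A, B, C, hA, h⟩

/-- `y` expressed as an integer Möbius image of `gaussMap^[k] y`. -/
theorem mobius {y : ℝ} (hy : Ir y) : ∀ k : ℕ, 1 ≤ k →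
    ∃ p q r s : ℤ, 0 ≤ p ∧ 1 ≤ q ∧ 1 ≤ r ∧ 1 ≤ s ∧
      y * ((r : ℝ) * gaussMap^[k] y + s) = (p : ℝ) * gaussMap^[k] y + q := by
  intro k hk
  induction k with
  | zero => omega
  | succ k ih =>
    rcases Nat.eq_or_lt_of_le hk with h1 | h1
    · -- k + 1 = 1, base case
      have hk0 : k = 0 := by omega
      subst hk0
      refine ⟨0, 1, 1, ⌊y⁻¹⌋, le_refl _, le_refl _, le_refl _, hy.floor_one_le, ?_⟩
      have hk1 : gaussMap^[1] y = gaussMap y := Function.iterate_one gaussMap ▸ rfl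
      rw [hk1]
      push_cast
      linarith [hy.key]
    · obtain ⟨p, q, r, s, hp, hq, hr, hs, heq⟩ := ih (by omega)
      set w := gaussMap^[k] y with hw
      have hIw : Ir w := hy.iter k
      set b : ℤ := ⌊w⁻¹⌋ with hb
      have hb1 : 1 ≤ b := hIw.floor_one_le
      have hkey : w * (gaussMap w + b) = 1 := hIw.key
      have hit : gaussMap^[k+1] y = gaussMap w := by
        rw [Function.iterate_succ_apply', hw]
      refine ⟨q, p + q * b, s, r + s * b, by omega, by nlinarith, by omega, by nlinarith, ?_⟩
      rw [hit]
      push_cast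
      linear_combination (b + gaussMap w) * heq + (p - y * r) * hkey
  
theorem quad_fixed {y : ℝ} {k : ℕ} (hy : Ir y) (hk : 1 ≤ k)
    (hfix : gaussMap^[k] y = y) : Quad y := by
  obtain ⟨p, q, r, s, hp, hq, hr, hs, heq⟩ := mobius hy k hk
  rw [hfix] at heq
  exact ⟨r, s - p, -q, by omega, by push_cast; linear_combination heq⟩

theorem quad_step {x : ℝ} (hx : Irrational x) (h0 : x ≠ 0) (a : ℤ)
    (hq : Quad (x⁻¹ - a)) : Quad x := by
  obtain ⟨A, B, C, hA, h⟩ := hq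
  have hrel : x * ((x⁻¹ - a) + a) = 1 := by field_simp; ring
  apply quad_upgrade hx (A := A * a ^ 2 - B * a + C) (B := B - 2 * A * a) (C := A)
    (by rintro ⟨-, -, h3⟩; exact hA h3)
  push_cast
  set y := x⁻¹ - (a : ℝ) with hy
  linear_combination x ^ 2 * h - ((A : ℝ) * (x * y + 1 - (a : ℝ) * x) + (B : ℝ) * x) * hrel

theorem quad_orbit {x : ℝ} (hx : Ir x) (n : ℕ) (h : Quad (gaussMap^[n] x)) : Quad x := by
  induction n generalizing x with
  | zero => exact h
  | succ n ih =>
    rw [Function.iterate_succ_apply] at h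
    have hgx : Quad (gaussMap x) := ih hx.gauss h
    rw [gauss_eq] at hgx
    exact quad_step hx.1 hx.2.1.ne' ⌊x⁻¹⌋ hgx

theorem quad_sub_int {x : ℝ} (m : ℤ) (h : Quad x) : Quad (x - m) := by
  obtain ⟨A, B, C, hA, h⟩ := h
  exact ⟨A, B + 2 * A * m, A * m ^ 2 + B * m + C, hA, by push_cast; linear_combination h⟩


/-- Coefficient triples of the quadratics satisfied by the Gauss-map orbit. -/
noncomputable def qtrip (x : ℝ) (t : ℤ × ℤ × ℤ) : ℕ → ℤ × ℤ × ℤ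
  | 0 => t
  | n + 1 =>
      ((qtrip x t n).2.2,
       2 * (qtrip x t n).2.2 * ⌊(gaussMap^[n] x)⁻¹⌋ + (qtrip x t n).2.1,
       (qtrip x t n).2.2 * ⌊(gaussMap^[n] x)⁻¹⌋ ^ 2 + (qtrip x t n).2.1 * ⌊(gaussMap^[n] x)⁻¹⌋
         + (qtrip x t n).1)

theorem qtrip_spec {x : ℝ} (hx : Ir x) {A B C : ℤ} (hA : A ≠ 0)
    (hroot : (A : ℝ) * x ^ 2 + B * x + C = 0) (n : ℕ) :
    (qtrip x (A, B, C) n).1 ≠ 0 ∧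
    ((qtrip x (A, B, C) n).1 : ℝ) * (gaussMap^[n] x) ^ 2
        + ((qtrip x (A, B, C) n).2.1 : ℝ) * (gaussMap^[n] x)
        + ((qtrip x (A, B, C) n).2.2 : ℝ) = 0 ∧
    (qtrip x (A, B, C) n).2.1 ^ 2 - 4 * (qtrip x (A, B, C) n).1 * (qtrip x (A, B, C) n).2.2
      = B ^ 2 - 4 * A * C := by
  induction n with
  | zero => exact ⟨hA, by simpa [qtrip] using hroot, by simp [qtrip]⟩
  | succ n ih =>
    obtain ⟨hA', hroot', hdisc'⟩ := ih
    set A' := (qtrip x (A, B, C) n).1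
    set B' := (qtrip x (A, B, C) n).2.1
    set C' := (qtrip x (A, B, C) n).2.2
    set xn := gaussMap^[n] x with hxn
    have hIxn : Ir xn := hx.iter n
    set a : ℤ := ⌊xn⁻¹⌋ with ha
    have hq1 : qtrip x (A, B, C) (n + 1)
        = (C', 2 * C' * a + B', C' * a ^ 2 + B' * a + A') := by
      simp [qtrip]
      exact ⟨rfl, rfl, rfl⟩
    have hxn0 : xn ≠ 0 := hIxn.2.1.ne'
    have hC0 : C' ≠ 0 := by
      intro hC
      have h1 : xn * ((A' : ℝ) * xn + B') = 0 := by
        rw [hC] at hroot'; push_cast at hroot'; linear_combination hroot'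
      rcases mul_eq_zero.mp h1 with h | h
      · exact hxn0 h
      · exact lin_contra hIxn.1 hA' h
    have hit : gaussMap^[n+1] x = gaussMap xn := by rw [Function.iterate_succ_apply', hxn]
    have hkey : xn * (gaussMap xn + a) = 1 := hIxn.key
    refine ⟨by rw [hq1]; exact hC0, ?_, ?_⟩
    · rw [hq1, hit]
      have hg : xn ^ 2 * ((C' : ℝ) * (gaussMap xn) ^ 2 + (2 * C' * a + B') * gaussMap xn
          + (C' * a ^ 2 + B' * a + A')) = 0 := by
        push_cast
        linear_combination hroot'
          + ((2 * (C' : ℝ)) + (C' : ℝ) * (xn * (gaussMap xn + a) - 1) + (B' : ℝ) * xn) * hkey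
      rcases mul_eq_zero.mp hg with h | h
      · exact absurd (pow_eq_zero_iff (by norm_num) |>.mp h) hxn0
      · push_cast at h ⊢; linear_combination h
    · rw [hq1]; linear_combination hdisc'


theorem abs_le_of_sq_le {b m : ℤ} (h : b ^ 2 ≤ m) : |b| ≤ m := by
  rcases eq_or_ne b 0 with rfl | hb
  · simpa using le_trans (by norm_num) h
  · calc |b| ≤ |b| * |b| := le_mul_of_one_le_left (abs_nonneg b) (Int.one_le_abs hb)
      _ = b ^ 2 := by rw [abs_mul_abs_self]; ring
      _ ≤ m := h

theorem orbit_repeat {x : ℝ} (hx : Ir x) (hq : Quad x) :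
    ∃ m n : ℕ, m < n ∧ gaussMap^[m] x = gaussMap^[n] x := by
  obtain ⟨A, B, C, hA, hroot⟩ := hq
  set D : ℤ := B ^ 2 - 4 * A * C with hD
  set An : ℕ → ℤ := fun n => (qtrip x (A, B, C) n).1 with hAndef
  set Bn : ℕ → ℤ := fun n => (qtrip x (A, B, C) n).2.1 with hBndef
  set Cn : ℕ → ℤ := fun n => (qtrip x (A, B, C) n).2.2 with hCndef
  set xs : ℕ → ℝ := fun n => gaussMap^[n] x with hxsdef
  set an : ℕ → ℤ := fun n => ⌊(xs n)⁻¹⌋ with handef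
  have hspec := qtrip_spec hx hA hroot
  have hAn : ∀ n, An n ≠ 0 := fun n => (hspec n).1
  have hroot' : ∀ n, (An n : ℝ) * xs n ^ 2 + Bn n * xs n + Cn n = 0 := fun n => (hspec n).2.1
  have hdisc : ∀ n, (Bn n) ^ 2 - 4 * An n * Cn n = D := fun n => (hspec n).2.2
  have hCA : ∀ n, Cn n = An (n + 1) := fun n => rfl
  have hIr : ∀ n, Ir (xs n) := fun n => hx.iter n
  have hxpos : ∀ n, 0 < xs n := fun n => (hIr n).2.1
  have hxlt : ∀ n, xs n < 1 := fun n => (hIr n).2.2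
  have hxne : ∀ n, xs n ≠ 0 := fun n => (hxpos n).ne'
  have hAn' : ∀ n, (An n : ℝ) ≠ 0 := fun n => Int.cast_ne_zero.mpr (hAn n)
  have han1 : ∀ n, 1 ≤ an n := fun n => (hIr n).floor_one_le
  have hxrec : ∀ n, xs (n + 1) = (xs n)⁻¹ - an n := fun n => by
    rw [hxsdef]; simp only [Function.iterate_succ_apply']; rw [gauss_eq]
  -- the conjugate root
  set u : ℕ → ℝ := fun n => -(Bn n) / (An n) - xs n with hudef
  have hsum : ∀ n, (An n : ℝ) * (xs n + u n) + Bn n = 0 := by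
    intro n; have := hAn' n; rw [hudef]; field_simp; ring
  have huroot : ∀ n, (An n : ℝ) * u n ^ 2 + Bn n * u n + Cn n = 0 := by
    intro n
    have hg : (An n : ℝ) * ((An n : ℝ) * u n ^ 2 + Bn n * u n + Cn n) = 0 := by
      linear_combination (An n : ℝ) * hroot' n
        + ((An n : ℝ) * u n - (An n : ℝ) * xs n) * hsum n
    rcases mul_eq_zero.mp hg with h | h
    · exact absurd h (hAn' n)
    · exact h
  have hune : ∀ n, u n ≠ 0 := by
    intro n h0
    have h1 := huroot n
    rw [h0] at h1
    simp at h1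
    exact hAn (n + 1) (by rw [← hCA n]; exact_mod_cast h1)
  have huneq : ∀ n, u n ≠ xs n := by
    intro n heq
    refine lin_contra (hIr n).1 (B := 2 * An n) (C := Bn n) (by simpa using hAn n) ?_
    have h := hsum n
    rw [heq] at h
    push_cast
    linear_combination h
  -- recurrence for the conjugate root
  have hurec : ∀ n, u (n + 1) = (u n)⁻¹ - an n := by
    intro n
    set z := (u n)⁻¹ - (an n : ℝ) with hz
    have hrel : u n * (z + an n) = 1 := by
      have := hune n; rw [hz]; field_simp; ring
    have hq1 : An (n+1) = Cn n ∧ Bn (n+1) = 2 * Cn n * an n + Bn n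
        ∧ Cn (n+1) = Cn n * an n ^ 2 + Bn n * an n + An n := ⟨rfl, rfl, rfl⟩
    obtain ⟨e1, e2, e3⟩ := hq1
    have hzroot : (An (n+1) : ℝ) * z ^ 2 + Bn (n+1) * z + Cn (n+1) = 0 := by
      have hg : u n ^ 2 * ((An (n+1) : ℝ) * z ^ 2 + Bn (n+1) * z + Cn (n+1)) = 0 := by
        rw [e1, e2, e3]
        push_cast
        linear_combination huroot n
          + ((2 * (Cn n : ℝ)) + (Cn n : ℝ) * (u n * (z + an n) - 1) + (Bn n : ℝ) * u n) * hrel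
      rcases mul_eq_zero.mp hg with h | h
      · exact absurd (pow_eq_zero_iff (by norm_num) |>.mp h) (hune n)
      · exact h
    have hzne : z ≠ xs (n+1) := by
      intro he
      have h2 : xs (n+1) = (xs n)⁻¹ - an n := hxrec n
      rw [h2, hz] at he
      have : (u n)⁻¹ = (xs n)⁻¹ := by linarith [he]
      exact huneq n (inv_injective this)
    have hv : (An (n+1) : ℝ) * (z + xs (n+1)) + Bn (n+1) = 0 := by
      have hfac : (z - xs (n+1)) * ((An (n+1) : ℝ) * (z + xs (n+1)) + Bn (n+1)) = 0 := by
        linear_combination hzroot - hroot' (n+1)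
      rcases mul_eq_zero.mp hfac with h | h
      · exact absurd (sub_eq_zero.mp h) hzne
      · exact h
    have hs := hsum (n+1)
    have : (An (n+1) : ℝ) * (z - u (n+1)) = 0 := by linear_combination hv - hs
    rcases mul_eq_zero.mp this with h | h
    · exact absurd h (hAn' (n+1))
    · have := sub_eq_zero.mp h; rw [hz] at this; exact this.symm ▸ rfl
  -- the conjugate root is eventually negative
  have hexN : ∃ N, u N < 0 := by
    by_contra hno
    push_neg at hno
    have hupos : ∀ n, 0 < u n := fun n => lt_of_le_of_ne (hno n) (Ne.symm (hune n))
    have hult : ∀ n, u n < 1 := by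
      intro n
      by_contra hge
      push_neg at hge
      have h1 : (u n)⁻¹ ≤ 1 := inv_le_one_of_one_le₀ hge
      have ha1 : (1 : ℝ) ≤ an n := by exact_mod_cast han1 n
      have h2 := hurec n
      have := hupos (n + 1)
      rw [h2] at this
      linarith
    set d : ℕ → ℝ := fun n => xs n - u n with hddef
    have hdne : ∀ n, d n ≠ 0 := fun n => sub_ne_zero.mpr (Ne.symm (huneq n))
    have hdrec : ∀ n, d (n + 1) * (xs n * u n) = -d n := by
      intro n
      have h1 := hurec n
      have h2 := hxrec n
      rw [hddef]
      simp only
      rw [h1, h2]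
      have hu0 := (hupos n).ne'
      have hx0 := hxne n
      field_simp
      ring
    have hpair : ∀ (v w : ℝ) (a : ℤ), 0 < v → 0 < w → w < 1 → 1 ≤ a →
        w = v⁻¹ - a → v * w < 1/2 := by
      intro v w a hv hw hw1 ha hrec
      have ha' : (1 : ℝ) ≤ a := by exact_mod_cast ha
      have hm : v * w = 1 - a * v := by
        rw [hrec]; field_simp
      nlinarith [mul_pos hv hw, mul_lt_of_lt_one_right hv hw1]
    have hx2 : ∀ n, xs n * xs (n + 1) < 1/2 :=
      fun n => hpair _ _ _ (hxpos n) (hxpos (n + 1)) (hxlt (n + 1)) (han1 n) (hxrec n)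
    have hu2 : ∀ n, u n * u (n + 1) < 1/2 :=
      fun n => hpair _ _ _ (hupos n) (hupos (n + 1)) (hult (n + 1)) (han1 n) (hurec n)
    have hgrow : ∀ m, 4 ^ m * |d 0| ≤ |d (2 * m)| := by
      intro m
      induction m with
      | zero => simp
      | succ m ih =>
        have key : d (2*m + 2) * ((xs (2*m) * u (2*m)) * (xs (2*m+1) * u (2*m+1))) = d (2*m) := by
          linear_combination (xs (2*m) * u (2*m)) * hdrec (2*m + 1) - hdrec (2*m)
        have hP1 : 0 < xs (2*m) * u (2*m) := mul_pos (hxpos _) (hupos _)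
        have hP2 : 0 < xs (2*m+1) * u (2*m+1) := mul_pos (hxpos _) (hupos _)
        have hPlt : (xs (2*m) * u (2*m)) * (xs (2*m+1) * u (2*m+1)) ≤ 1/4 := by
          have e1 : (xs (2*m) * u (2*m)) * (xs (2*m+1) * u (2*m+1))
              = (xs (2*m) * xs (2*m+1)) * (u (2*m) * u (2*m+1)) := by ring
          rw [e1]
          nlinarith [hx2 (2*m), hu2 (2*m), mul_pos (hxpos (2*m)) (hxpos (2*m+1)),
            mul_pos (hupos (2*m)) (hupos (2*m+1))]
        have habs : |d (2*m + 2)| * ((xs (2*m) * u (2*m)) * (xs (2*m+1) * u (2*m+1)))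
            = |d (2*m)| := by
          rw [← abs_of_pos (mul_pos hP1 hP2), ← abs_mul, key]
        have h4 : |d (2*m)| ≤ |d (2*m + 2)| * (1/4) := by
          rw [← habs]
          exact mul_le_mul_of_nonneg_left hPlt (abs_nonneg _)
        have : 2 * (m + 1) = 2 * m + 2 := by ring
        rw [this, pow_succ]
        nlinarith [abs_nonneg (d (2*m))]
    have hdb : ∀ n, |d n| < 1 := by
      intro n
      rw [hddef]
      exact abs_sub_lt_iff.mpr ⟨by linarith [hxlt n, hupos n], by linarith [hult n, hxpos n]⟩
    obtain ⟨m, hm⟩ := pow_unbounded_of_one_lt (|d 0|)⁻¹ (by norm_num : (1 : ℝ) < 4)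
    have h0 : 0 < |d 0| := abs_pos.mpr (hdne 0)
    have h1 : (1 : ℝ) < 4 ^ m * |d 0| := by
      calc (1 : ℝ) = (|d 0|)⁻¹ * |d 0| := (inv_mul_cancel₀ h0.ne').symm
        _ < 4 ^ m * |d 0| := by exact mul_lt_mul_of_pos_right hm h0
    linarith [hgrow m, hdb (2 * m)]
  obtain ⟨N, hN⟩ := hexN
  have hstepneg : ∀ n, u n < 0 → u (n + 1) < -1 := by
    intro n hn
    have h1 : (u n)⁻¹ < 0 := inv_neg''.mpr hn
    have ha' : (1 : ℝ) ≤ an n := by exact_mod_cast han1 n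
    rw [hurec n]
    linarith
  have hneg : ∀ j, u (N + 1 + j) < -1 := by
    intro j
    induction j with
    | zero => exact hstepneg N hN
    | succ j ih =>
      have : N + 1 + (j + 1) = (N + 1 + j) + 1 := by ring
      rw [this]
      exact hstepneg _ (lt_trans ih (by norm_num))
  -- discriminant positivity and coefficient bounds
  have hgap : ∀ n, (An n : ℝ) ^ 2 * (xs n - u n) ^ 2 = (D : ℝ) := by
    intro n
    have hD' : (D : ℝ) = (Bn n : ℝ) ^ 2 - 4 * An n * Cn n := by
      rw [← hdisc n]; push_cast; ring
    rw [hD']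
    linear_combination (2 * (An n : ℝ) * (xs n + u n) - ((An n : ℝ) * (xs n + u n) + Bn n)
        - 4 * (An n : ℝ) * xs n) * hsum n + 4 * (An n : ℝ) * hroot' n
  have hsubne : ∀ n, xs n - u n ≠ 0 := fun n => sub_ne_zero.mpr (Ne.symm (huneq n))
  have hDpos : 0 < D := by
    have h := hgap 0
    have h1 : 0 < (An 0 : ℝ) ^ 2 := by positivity
    have h2 : 0 < (xs 0 - u 0) ^ 2 := (sq_nonneg _).lt_of_ne' (pow_ne_zero 2 (hsubne 0))
    have : (0 : ℝ) < (D : ℝ) := h ▸ mul_pos h1 h2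
    exact_mod_cast this
  -- coefficient bounds in the tail
  have hAbound : ∀ n, N + 1 ≤ n → (An n) ^ 2 ≤ D := by
    intro n hn
    obtain ⟨j, rfl⟩ : ∃ j, n = N + 1 + j := ⟨n - (N + 1), by omega⟩
    have hu1 : u (N + 1 + j) < -1 := hneg j
    have hgap1 : (1 : ℝ) < (xs (N+1+j) - u (N+1+j)) ^ 2 := by
      nlinarith [hxpos (N+1+j)]
    have h := hgap (N+1+j)
    have hA2 : (0:ℝ) < (An (N+1+j) : ℝ) ^ 2 := (sq_nonneg _).lt_of_ne' (pow_ne_zero 2 (hAn' _))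
    have : ((An (N+1+j)) ^ 2 : ℝ) < (D : ℝ) := by nlinarith [hA2, hgap1, h]
    have : ((An (N+1+j)) ^ 2 : ℤ) < D := by exact_mod_cast this
    omega
  have hCbound : ∀ n, N + 1 ≤ n → (Cn n) ^ 2 ≤ D := by
    intro n hn
    rw [hCA n]
    exact hAbound (n + 1) (by omega)
  have hBbound : ∀ n, N + 1 ≤ n → (Bn n) ^ 2 ≤ 5 * D := by
    intro n hn
    have h1 := hAbound n hn
    have h2 := hCbound n hn
    have h3 := hdisc n
    nlinarith [sq_nonneg (An n - Cn n), sq_nonneg (An n + Cn n)]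
  -- pigeonhole
  set S : Finset (ℤ × ℤ × ℤ) := Finset.Icc (-D, -(5*D), -D) (D, 5*D, D) with hS
  have hmem : ∀ j : ℕ, qtrip x (A, B, C) (N + 1 + j) ∈ S := by
    intro j
    have h1 := abs_le.mp (abs_le_of_sq_le (hAbound (N+1+j) (by omega)))
    have h2 := abs_le.mp (abs_le_of_sq_le (hBbound (N+1+j) (by omega)))
    have h3 := abs_le.mp (abs_le_of_sq_le (hCbound (N+1+j) (by omega)))
    rw [hS, Finset.mem_Icc]
    constructor
    · exact ⟨h1.1, h2.1, h3.1⟩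
    · exact ⟨h1.2, h2.2, h3.2⟩
  obtain ⟨t, ht⟩ := Finite.exists_infinite_fiber
    (fun j : ℕ => (⟨qtrip x (A, B, C) (N + 1 + j), hmem j⟩ : {s // s ∈ S}))
  have hinf : {j : ℕ | qtrip x (A, B, C) (N + 1 + j) = (t : ℤ × ℤ × ℤ)}.Infinite := by
    have h' := Set.infinite_coe_iff.mp ht
    exact h'.mono (fun j hj => congrArg Subtype.val
      (hj : (⟨qtrip x (A, B, C) (N + 1 + j), hmem j⟩ : {s // s ∈ S}) = t))
  obtain ⟨i, hi⟩ := hinf.nonempty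
  obtain ⟨j, hj, hij⟩ := hinf.exists_gt i
  obtain ⟨k, hk, hjk⟩ := hinf.exists_gt j
  simp only [Set.mem_setOf_eq] at hi hj hk
  set t1 := (t : ℤ × ℤ × ℤ).1 with ht1
  set t2 := (t : ℤ × ℤ × ℤ).2.1 with ht2
  set t3 := (t : ℤ × ℤ × ℤ).2.2 with ht3
  have ht1ne : t1 ≠ 0 := by
    rw [ht1, ← hi]
    exact hAn (N + 1 + i)
  have hr : ∀ a : ℕ, qtrip x (A, B, C) (N + 1 + a) = (t : ℤ × ℤ × ℤ) →
      (t1 : ℝ) * xs (N + 1 + a) ^ 2 + t2 * xs (N + 1 + a) + t3 = 0 := by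
    intro a ha
    have h := hroot' (N + 1 + a)
    rw [hAndef, hBndef, hCndef] at h
    simp only at h
    rw [ha] at h
    exact h
  have r1 := hr i hi
  have r2 := hr j hj
  have r3 := hr k hk
  have pairsum : ∀ w1 w2 : ℝ, (t1 : ℝ) * w1 ^ 2 + t2 * w1 + t3 = 0 →
      (t1 : ℝ) * w2 ^ 2 + t2 * w2 + t3 = 0 → w1 ≠ w2 →
      (t1 : ℝ) * (w1 + w2) + t2 = 0 := by
    intro w1 w2 e1 e2 hne
    have hfac : (w1 - w2) * ((t1 : ℝ) * (w1 + w2) + t2) = 0 := by linear_combination e1 - e2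
    rcases mul_eq_zero.mp hfac with h | h
    · exact absurd (sub_eq_zero.mp h) hne
    · exact h
  have ht1ne' : (t1 : ℝ) ≠ 0 := Int.cast_ne_zero.mpr ht1ne
  rcases eq_or_ne (xs (N + 1 + i)) (xs (N + 1 + j)) with he | hne1
  · exact ⟨N + 1 + i, N + 1 + j, by omega, he⟩
  rcases eq_or_ne (xs (N + 1 + i)) (xs (N + 1 + k)) with he | hne2
  · exact ⟨N + 1 + i, N + 1 + k, by omega, he⟩
  have s1 := pairsum _ _ r1 r2 hne1
  have s2 := pairsum _ _ r1 r3 hne2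
  have : (t1 : ℝ) * (xs (N + 1 + j) - xs (N + 1 + k)) = 0 := by linear_combination s1 - s2
  rcases mul_eq_zero.mp this with h | h
  · exact absurd h ht1ne'
  · exact ⟨N + 1 + j, N + 1 + k, by omega, sub_eq_zero.mp h⟩


end LagrangeAux


section
open LagrangeAux

/-- Lagrange's theorem: the continued fraction expansion of a positive
irrational `α` is eventually periodic iff `α` is a root of a quadratic
polynomial with integer coefficients.  (The partial quotients of `α` beyond
`a₀ = ⌊α⌋` are those of its fractional part.) -/
theorem lagrange_periodic_iff_quadratic (α : ℝ) (hirr : Irrational α)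
    (h0 : 0 < α) :
    (∃ L k : ℕ, 1 ≤ k ∧ ∀ l ≥ L, cfA (Int.fract α) (l + k) = cfA (Int.fract α) l)
      ↔ ∃ A B C : ℤ, A ≠ 0 ∧ (A : ℝ) * α ^ 2 + B * α + C = 0 := by
  set x := Int.fract α with hxdef
  have hx : Ir x := ir_fract hirr
  have hcfA : ∀ m : ℕ, cfA x (m + 1) = ⌊(gaussMap^[m] x)⁻¹⌋₊ := by
    intro m; simp [cfA]
  have hfloorconv : ∀ m m' : ℕ, cfA x (m + 1) = cfA x (m' + 1) →
      ⌊(gaussMap^[m] x)⁻¹⌋ = ⌊(gaussMap^[m'] x)⁻¹⌋ := by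
    intro m m' h
    rw [hcfA, hcfA] at h
    have p1 : (0:ℝ) ≤ (gaussMap^[m] x)⁻¹ := le_of_lt (inv_pos.mpr (hx.iter m).2.1)
    have p2 : (0:ℝ) ≤ (gaussMap^[m'] x)⁻¹ := le_of_lt (inv_pos.mpr (hx.iter m').2.1)
    rw [← Int.natCast_floor_eq_floor p1, ← Int.natCast_floor_eq_floor p2]
    exact_mod_cast h
  constructor
  · rintro ⟨L, k, hk, hper⟩
    set y := gaussMap^[L] x with hy
    have hIy : Ir y := hx.iter L
    have hIz : Ir (gaussMap^[k] y) := hIy.iter k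
    have hfl : ∀ n : ℕ,
        ⌊(gaussMap^[n] y)⁻¹⌋ = ⌊(gaussMap^[n] (gaussMap^[k] y))⁻¹⌋ := by
      intro n
      have h1 : gaussMap^[n] y = gaussMap^[n + L] x := by
        rw [hy, ← Function.iterate_add_apply]
      have h2 : gaussMap^[n] (gaussMap^[k] y) = gaussMap^[n + L + k] x := by
        rw [hy, ← Function.iterate_add_apply, ← Function.iterate_add_apply]
        congr 1
        omega
      rw [h1, h2]
      have hp := hper (n + L + 1) (by omega)
      have e1 : n + L + 1 + k = (n + L + k) + 1 := by omega
      rw [e1] at hp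
      exact (hfloorconv _ _ hp).symm
    have hfix : gaussMap^[k] y = y := (eq_of_same hIy hIz hfl).symm
    have hqy : Quad y := quad_fixed hIy hk hfix
    have hqx : Quad x := quad_orbit hx L hqy
    have hqα : Quad α := by
      have h2 := quad_sub_int (-⌊α⌋) hqx
      have e : x - ((-⌊α⌋ : ℤ) : ℝ) = α := by
        rw [hxdef]
        push_cast
        rw [sub_neg_eq_add]
        exact Int.fract_add_floor α
      rwa [e] at h2
    exact hqα
  · rintro ⟨A, B, C, hA, hroot⟩
    have hqx : Quad x := by
      have h2 := quad_sub_int ⌊α⌋ ⟨A, B, C, hA, hroot⟩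
      rwa [show α - (⌊α⌋ : ℝ) = x from Int.self_sub_floor α] at h2
    obtain ⟨m, n, hmn, heq⟩ := orbit_repeat hx hqx
    refine ⟨m + 1, n - m, by omega, ?_⟩
    intro l hl
    have hiter : ∀ j : ℕ, gaussMap^[j + m] x = gaussMap^[j + n] x := by
      intro j
      rw [Function.iterate_add_apply, Function.iterate_add_apply, heq]
    show ⌊(gaussMap^[l + (n - m) - 1] x)⁻¹⌋₊ = ⌊(gaussMap^[l - 1] x)⁻¹⌋₊
    have e1 : l + (n - m) - 1 = (l - 1 - m) + n := by omega
    have e2 : l - 1 = (l - 1 - m) + m := by omega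
    rw [e2, e1, hiter (l - 1 - m)]

end
end
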